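/- arXiv:2301.03762 — 9 statements merged into one kernel-verified Lean document; each statement's English description precedes it below -/
import Mathlib

section
/- For every n ≥ 2 and every Hessenberg function h on [n], the Poincaré polynomial satisfies the recurrence P_h(q) = Σ_{j=1}^{n} q^{h(j)−j} · P_{h^j}(q), where the sum is over j ∈ [n] and h^j is the Hessenberg function on [n−1] obtained by deleting the j-th row and column. -/
/-- The inclusion `Fin (n-1) → Fin n`. -/
def finIncl {n : ℕ} (i : Fin (n - 1)) : Fin n := ⟨(i : ℕ), by have := i.isLt; omega⟩

/-- The shifted inclusion `Fin (n-1) → Fin n`, `i ↦ i+1`. -/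
def finSuccIncl {n : ℕ} (i : Fin (n - 1)) : Fin n := ⟨(i : ℕ) + 1, by have := i.isLt; omega⟩

/-- The Hessenberg function `h^r` on `[n-1]` obtained from `h` by deleting the `r`-th row
and `r`-th column (0-based indexing):  `h^r(i) = h(i)` if `i < r` and `h(i) < r`,
`h^r(i) = h(i) − 1` if `i < r ≤ h(i)`, and `h^r(i) = h(i+1) − 1` if `i ≥ r`. -/
def hminor {n : ℕ} (h : Fin n → Fin n) (r : Fin n) (i : Fin (n - 1)) : Fin (n - 1) :=
  ⟨if (i : ℕ) < (r : ℕ) then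
      if (h (finIncl i) : ℕ) < (r : ℕ) then (h (finIncl i) : ℕ) else (h (finIncl i) : ℕ) - 1
    else (h (finSuccIncl i) : ℕ) - 1, by
    have h1 := i.isLt
    have h2 := r.isLt
    have h3 := (h (finIncl i)).isLt
    have h4 := (h (finSuccIncl i)).isLt
    split_ifs <;> omega⟩

/-- `ℓ_h(w) = #{(j,i) : j < i, w(j) > w(i), i ≤ h(j)}`. -/
def ellh {n : ℕ} (h : Fin n → Fin n) (w : Equiv.Perm (Fin n)) : ℕ :=
  (Finset.univ.filter
    (fun p : Fin n × Fin n => p.1 < p.2 ∧ w p.2 < w p.1 ∧ p.2 ≤ h p.1)).card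

/-- The Poincaré polynomial `P_h(q) = Σ_{w ∈ S_n} q^{ℓ_h(w)}` of `X(h)`. -/
noncomputable def Poin {n : ℕ} (h : Fin n → Fin n) : Polynomial ℤ :=
  ∑ w : Equiv.Perm (Fin n), Polynomial.X ^ ellh h w

-- auxiliary
def insPerm {m : ℕ} (r : Fin (m+1)) (w' : Equiv.Perm (Fin m)) : Equiv.Perm (Fin (m+1)) :=
  ((finSuccEquiv' r).trans (w'.optionCongr)).trans (finSuccEquiv' (Fin.last m)).symm

lemma insPerm_pivot {m : ℕ} (r : Fin (m+1)) (w' : Equiv.Perm (Fin m)) :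
    insPerm r w' r = Fin.last m := by
  simp [insPerm, finSuccEquiv'_at]

lemma insPerm_succAbove {m : ℕ} (r : Fin (m+1)) (w' : Equiv.Perm (Fin m)) (a : Fin m) :
    insPerm r w' (r.succAbove a) = (w' a).castSucc := by
  simp [insPerm, finSuccEquiv'_succAbove, finSuccEquiv'_symm_some, Fin.succAbove_last]

lemma val_succAbove {m : ℕ} (r : Fin (m+1)) (a : Fin m) :
    ((r.succAbove a : Fin (m+1)) : ℕ) = if (a:ℕ) < (r:ℕ) then (a:ℕ) else (a:ℕ)+1 := by
  rcases lt_or_ge (a.castSucc) r with hc | hc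
  · rw [Fin.succAbove_of_castSucc_lt _ _ hc]
    have : (a:ℕ) < (r:ℕ) := by simpa [Fin.lt_def] using hc
    simp [this]
  · rw [Fin.succAbove_of_le_castSucc _ _ hc]
    have : ¬ ((a:ℕ) < (r:ℕ)) := by simpa [Fin.le_def] using hc
    simp [this]

lemma card_filter_Ico (k x y : ℕ) (hy : y ≤ k) :
    (Finset.univ.filter (fun b : Fin k => x ≤ (b:ℕ) ∧ (b:ℕ) < y)).card = y - x := by
  rw [← Nat.card_Ico x y]
  refine Finset.card_bij (fun b _ => (b : ℕ)) ?_ ?_ ?_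
  · intro b hb; simp only [Finset.mem_filter] at hb; simp [Finset.mem_Ico]; omega
  · intro b _ c _ hbc; exact Fin.val_injective hbc
  · intro t ht
    simp only [Finset.mem_Ico] at ht
    exact ⟨⟨t, by omega⟩, by simp; omega, rfl⟩

lemma third_iff {m : ℕ} (h : Fin (m+1) → Fin (m+1)) (hhess : ∀ j, j ≤ h j)
    (r : Fin (m+1)) (a b : Fin m) :
    r.succAbove b ≤ h (r.succAbove a) ↔ b ≤ hminor h r a := by
  have hb := b.isLt
  have hr := r.isLt
  by_cases har : (a:ℕ) < (r:ℕ)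
  · have e : r.succAbove a = finIncl (n := m+1) a := by
      apply Fin.ext; rw [val_succAbove, if_pos har]; rfl
    have hha : (a:ℕ) ≤ (h (finIncl a) : ℕ) := hhess (finIncl a)
    rw [e, Fin.le_def, Fin.le_def, val_succAbove]
    show _ ↔ (b:ℕ) ≤ ((⟨_, _⟩ : Fin m) : ℕ)
    simp only [hminor, if_pos har]
    split_ifs <;> omega
  · have e : r.succAbove a = finSuccIncl (n := m+1) a := by
      apply Fin.ext; rw [val_succAbove, if_neg har]; rfl
    have hha : (a:ℕ)+1 ≤ (h (finSuccIncl a) : ℕ) := hhess (finSuccIncl a)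
    rw [e, Fin.le_def, Fin.le_def, val_succAbove]
    show _ ↔ (b:ℕ) ≤ ((⟨_, _⟩ : Fin m) : ℕ)
    simp only [hminor, if_neg har]
    split_ifs <;> omega

lemma ellh_eq_sum {k : ℕ} (g : Fin k → Fin k) (w : Equiv.Perm (Fin k)) :
    ellh g w = ∑ j : Fin k, ∑ i : Fin k,
      (if j < i ∧ w i < w j ∧ i ≤ g j then 1 else 0) := by
  rw [ellh, Finset.card_filter]
  exact Fintype.sum_prod_type _

lemma ellh_insPerm {m : ℕ} (h : Fin (m+1) → Fin (m+1)) (hhess : ∀ j, j ≤ h j)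
    (r : Fin (m+1)) (w' : Equiv.Perm (Fin m)) :
    ellh h (insPerm r w') = ((h r : ℕ) - (r : ℕ)) + ellh (hminor h r) w' := by
  set w := insPerm r w' with hw
  have hpiv : w r = Fin.last m := insPerm_pivot r w'
  have hsa : ∀ a, w (r.succAbove a) = (w' a).castSucc := insPerm_succAbove r w'
  rw [ellh_eq_sum h w, Fin.sum_univ_succAbove _ r]
  have inner1 : (∑ i : Fin (m+1), if r < i ∧ w i < w r ∧ i ≤ h r then (1:ℕ) else 0)
      = (h r : ℕ) - (r : ℕ) := by
    rw [← Finset.card_filter]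
    have hset : (Finset.univ.filter fun i : Fin (m+1) => r < i ∧ w i < w r ∧ i ≤ h r)
        = Finset.univ.filter fun i : Fin (m+1) => (r:ℕ)+1 ≤ (i:ℕ) ∧ (i:ℕ) < (h r:ℕ)+1 := by
      ext i
      simp only [Finset.mem_filter, Finset.mem_univ, true_and]
      constructor
      · rintro ⟨h1, h2, h3⟩
        rw [Fin.lt_def] at h1; rw [Fin.le_def] at h3; omega
      · rintro ⟨h1, h2⟩
        have hir : i ≠ r := by
          intro e; subst e; omega
        have hwv : (w i : ℕ) ≠ m := by
          intro e
          exact hir (w.injective (by rw [hpiv]; exact Fin.ext e))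
        have hwlt := (w i).isLt
        exact ⟨Fin.lt_def.2 (by omega), by rw [hpiv, Fin.lt_def]; simp [Fin.last]; omega,
          Fin.le_def.2 (by omega)⟩
    rw [hset, card_filter_Ico _ _ _ (by have := (h r).isLt; omega)]
    omega
  rw [inner1]
  congr 1
  rw [ellh_eq_sum (hminor h r) w']
  apply Finset.sum_congr rfl
  intro a _
  rw [Fin.sum_univ_succAbove _ r]
  have z : (if r.succAbove a < r ∧ w r < w (r.succAbove a) ∧ r ≤ h (r.succAbove a)
      then (1:ℕ) else 0) = 0 := by
    rw [if_neg]
    rintro ⟨-, hlt, -⟩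
    rw [hpiv, hsa] at hlt
    rw [Fin.lt_def] at hlt
    have := (w' a).isLt
    simp [Fin.last] at hlt
    omega
  rw [z, zero_add]
  apply Finset.sum_congr rfl
  intro b _
  refine if_congr ?_ rfl rfl
  rw [hsa, hsa, Fin.castSucc_lt_castSucc_iff, Fin.succAbove_lt_succAbove_iff,
    third_iff h hhess r a b]

lemma insPerm_bijective (m : ℕ) :
    Function.Bijective (fun p : Fin (m+1) × Equiv.Perm (Fin m) => insPerm p.1 p.2) := by
  rw [Fintype.bijective_iff_injective_and_card]
  constructor
  · rintro ⟨r, w'⟩ ⟨s, v'⟩ hEq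
    simp only at hEq
    have hrs : r = s := by
      have h1 : insPerm r w' r = Fin.last m := insPerm_pivot r w'
      have h2 : insPerm r w' s = Fin.last m := by rw [hEq]; exact insPerm_pivot s v'
      exact (insPerm r w').injective (h1.trans h2.symm)
    subst hrs
    have hwv : w' = v' := by
      apply Equiv.ext; intro a
      have hc := congrArg (fun g => g (r.succAbove a)) hEq
      simp only [insPerm_succAbove] at hc
      exact Fin.castSucc_injective _ hc
    rw [hwv]
  · simp [Fintype.card_perm, Fintype.card_prod, Fintype.card_fin, Nat.factorial_succ]


/-- for every `n ≥ 2` and every Hessenberg function `h` on `[n]`,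
`P_h(q) = Σ_{j=1}^{n} q^{h(j)−j} · P_{h^j}(q)`. -/
theorem poincare_recurrence (n : ℕ) (hn : 2 ≤ n) (h : Fin n → Fin n)
    (hmono : Monotone h) (hhess : ∀ j, j ≤ h j) :
    Poin h = ∑ j : Fin n, Polynomial.X ^ ((h j : ℕ) - (j : ℕ)) * Poin (hminor h j) := by
  obtain ⟨m, rfl⟩ : ∃ m, n = m + 1 := ⟨n - 1, by omega⟩
  have key := Fintype.sum_bijective
    (fun p : Fin (m+1) × Equiv.Perm (Fin m) => insPerm p.1 p.2) (insPerm_bijective m)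
    (fun p => (Polynomial.X : Polynomial ℤ) ^ ((h p.1 : ℕ) - (p.1 : ℕ))
      * Polynomial.X ^ ellh (hminor h p.1) p.2)
    (fun w => (Polynomial.X : Polynomial ℤ) ^ ellh h w)
    (fun p => by simp only [ellh_insPerm h hhess p.1 p.2, pow_add])
  calc Poin h = ∑ w : Equiv.Perm (Fin (m+1)), (Polynomial.X : Polynomial ℤ) ^ ellh h w := rfl
    _ = ∑ p : Fin (m+1) × Equiv.Perm (Fin m),
        (Polynomial.X : Polynomial ℤ) ^ ((h p.1 : ℕ) - (p.1 : ℕ))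
          * Polynomial.X ^ ellh (hminor h p.1) p.2 := key.symm
    _ = ∑ r : Fin (m+1), ∑ w' : Equiv.Perm (Fin m),
        (Polynomial.X : Polynomial ℤ) ^ ((h r : ℕ) - (r : ℕ))
          * Polynomial.X ^ ellh (hminor h r) w' := Fintype.sum_prod_type _
    _ = ∑ j : Fin (m+1), Polynomial.X ^ ((h j : ℕ) - (j : ℕ)) * Poin (hminor h j) := by
        apply Finset.sum_congr rfl
        intro r _
        rw [Poin, Finset.mul_sum]
        rfl
end

section
/- For n ≥ 5, writing P_n(q) = P_{h_n}(q), the following recurrence holds: P_n(q) = (1+q)² [n−2]_q! + (n−2)(q+q²)[n−3]_q [n−3]_q! + (n−1)(q+q^{n−3}) { (1+q)[n−3]_q! + (n−3) q [n−4]_q [n−4]_q! } + (q + q² + ⋯ + q^{n−4}) P_{n−1}(q). -/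
/-- The q-integer `[m]_q = 1 + q + ⋯ + q^{m-1}`. -/
noncomputable def qInt (m : ℕ) : Polynomial ℤ := ∑ i ∈ Finset.range m, Polynomial.X ^ i

/-- The q-factorial `[m]_q! = [1]_q [2]_q ⋯ [m]_q`. -/
noncomputable def qFact : ℕ → Polynomial ℤ
  | 0 => 1
  | m + 1 => qFact m * qInt (m + 1)

def saN (p i : ℕ) : ℕ := if i < p then i else i + 1

def pstat (m : ℕ) (R : ℕ → ℕ → Bool) (w : Equiv.Perm (Fin m)) : ℕ :=
  (Finset.univ.filter
    (fun p : Fin m × Fin m => p.1 < p.2 ∧ w p.2 < w p.1 ∧ R p.1 p.2 = true)).card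

noncomputable def psum (m : ℕ) (R : ℕ → ℕ → Bool) : Polynomial ℤ :=
  ∑ w : Equiv.Perm (Fin m), Polynomial.X ^ pstat m R w

def cnt (m : ℕ) (R : ℕ → ℕ → Bool) (p : ℕ) : ℕ :=
  ((Finset.range m).filter (fun j => p < j ∧ R p j = true)).card

def insP (m : ℕ) (p : Fin (m+1)) (σ : Equiv.Perm (Fin m)) : Equiv.Perm (Fin (m+1)) :=
  ((finSuccEquiv' p).trans (Equiv.optionCongr σ)).trans (finSuccEquiv' (Fin.last m)).symm

lemma insP_apply_p (m : ℕ) (p : Fin (m+1)) (σ : Equiv.Perm (Fin m)) :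
    insP m p σ p = Fin.last m := by
  simp [insP, finSuccEquiv'_at]

lemma insP_apply_succAbove (m : ℕ) (p : Fin (m+1)) (σ : Equiv.Perm (Fin m)) (j : Fin m) :
    insP m p σ (p.succAbove j) = Fin.castSucc (σ j) := by
  simp [insP, finSuccEquiv'_succAbove, finSuccEquiv'_symm_some]

def insE (m : ℕ) : Fin (m+1) × Equiv.Perm (Fin m) ≃ Equiv.Perm (Fin (m+1)) where
  toFun x := insP m x.1 x.2
  invFun w := (w⁻¹ (Fin.last m),
      Equiv.removeNone (((finSuccEquiv' (w⁻¹ (Fin.last m))).symm.trans w).trans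
        (finSuccEquiv' (Fin.last m))))
  left_inv := by
    rintro ⟨p, σ⟩
    have hp : (insP m p σ)⁻¹ (Fin.last m) = p := by
      rw [← insP_apply_p m p σ]; simp
    ext1
    · simpa using hp
    · simp only
      rw [hp]
      ext j
      have key : (((finSuccEquiv' p).symm.trans (insP m p σ : Equiv _ _)).trans
          (finSuccEquiv' (Fin.last m))) (some j) = some (σ j) := by
        simp [finSuccEquiv'_symm_some, insP_apply_succAbove, ← Fin.succAbove_last,
          finSuccEquiv'_succAbove]
      have := Equiv.removeNone_some _ ⟨σ j, key⟩
      rw [key] at this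
      exact congrArg Fin.val (by simpa using this)
  right_inv := by
    intro w
    set p := w⁻¹ (Fin.last m) with hp
    have hwp : w p = Fin.last m := by rw [hp]; simp
    set C := ((finSuccEquiv' p).symm.trans (w : Equiv _ _)).trans
        (finSuccEquiv' (Fin.last m)) with hC
    ext i
    rcases eq_or_ne i p with rfl | hip
    · rw [insP_apply_p, hwp]
    · obtain ⟨j, rfl⟩ := Fin.exists_succAbove_eq hip
      have hne : w (p.succAbove j) ≠ Fin.last m := by
        intro hcon
        exact (Fin.succAbove_ne p j) (w.injective (hcon.trans hwp.symm))
      obtain ⟨y, hy⟩ := Fin.exists_succAbove_eq hne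
      have key : C (some j) = some y := by
        rw [hC]
        simp only [Equiv.trans_apply, finSuccEquiv'_symm_some, ← hy]
        exact finSuccEquiv'_succAbove _ _
      have h2 := Equiv.removeNone_some C ⟨y, key⟩
      rw [key] at h2
      have hr : Equiv.removeNone C j = y := by simpa using h2
      suffices hgoal : insP m p (Equiv.removeNone C) (p.succAbove j) = w (p.succAbove j) by
        exact congrArg Fin.val hgoal
      rw [insP_apply_succAbove, hr, ← hy, Fin.succAbove_last]

lemma val_succAbove_s6 (m : ℕ) (p : Fin (m+1)) (i : Fin m) :
    ((p.succAbove i : Fin (m+1)) : ℕ) = saN (p : ℕ) (i : ℕ) := by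
  unfold saN
  rcases lt_or_ge ((i : ℕ)) ((p : ℕ)) with hlt | hge
  · rw [Fin.succAbove_of_castSucc_lt _ _ (by simpa [Fin.lt_def] using hlt)]
    simp [if_pos hlt]
  · rw [Fin.succAbove_of_le_castSucc _ _ (by simpa [Fin.le_def] using hge)]
    simp [Nat.not_lt.mpr hge]

lemma pstat_insE (m : ℕ) (R : ℕ → ℕ → Bool) (p : Fin (m+1)) (σ : Equiv.Perm (Fin m)) :
    pstat (m+1) R (insE m (p, σ)) =
      cnt (m+1) R (p : ℕ) + pstat m (fun i j => R (saN p i) (saN p j)) σ := by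
  classical
  set w := insE m (p, σ) with hw
  have hwp : w p = Fin.last m := insP_apply_p m p σ
  have hws : ∀ j, w (p.succAbove j) = Fin.castSucc (σ j) := insP_apply_succAbove m p σ
  set A := (Finset.univ.filter
    (fun q : Fin (m+1) × Fin (m+1) => q.1 < q.2 ∧ w q.2 < w q.1 ∧ R q.1 q.2 = true)) with hA
  have hsplit := Finset.card_filter_add_card_filter_not
    (s := A) (p := fun q => q.1 = p)
  have hsnd : ∀ q ∈ A, q.2 ≠ p := by
    rintro ⟨a, b⟩ hq rfl
    have := (Finset.mem_filter.mp hq).2.2.1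
    rw [hwp] at this
    exact absurd this (by simp [Fin.le_last, not_lt_of_ge])
  have h1 : (A.filter (fun q => q.1 = p)).card = cnt (m+1) R (p : ℕ) := by
    apply Finset.card_bij (fun q _ => ((q.2 : ℕ)))
    · rintro ⟨a, b⟩ hq
      simp only [Finset.mem_filter] at hq
      obtain ⟨hq, rfl⟩ := hq
      obtain ⟨h1, h2, h3⟩ := (Finset.mem_filter.mp hq).2
      simp only [cnt, Finset.mem_filter, Finset.mem_range]
      exact ⟨b.isLt, h1, h3⟩
    · rintro ⟨a, b⟩ ha ⟨c, d⟩ hc hbd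
      simp only [Finset.mem_filter] at ha hc
      have : b = d := Fin.val_injective hbd
      rw [Prod.mk.injEq]
      exact ⟨ha.2.trans hc.2.symm, this⟩
    · intro j hj
      simp only [cnt, Finset.mem_filter, Finset.mem_range] at hj
      obtain ⟨hjm, hpj, hR⟩ := hj
      refine ⟨(p, ⟨j, hjm⟩), ?_, rfl⟩
      have hbp : (⟨j, hjm⟩ : Fin (m+1)) ≠ p := by
        intro hcon
        rw [← hcon] at hpj; simp at hpj
      have hlt : p < (⟨j, hjm⟩ : Fin (m+1)) := by simpa [Fin.lt_def] using hpj
      have hwb : w ⟨j, hjm⟩ < w p := by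
        rw [hwp]
        exact lt_of_le_of_ne (Fin.le_last _) (fun hcon => hbp (w.injective (hcon.trans hwp.symm)))
      refine Finset.mem_filter.mpr ⟨Finset.mem_filter.mpr ⟨Finset.mem_univ _, hlt, hwb, hR⟩, rfl⟩
  have h2 : (A.filter (fun q => ¬ q.1 = p)).card
      = pstat m (fun i j => R (saN p i) (saN p j)) σ := by
    rw [pstat]
    symm
    apply Finset.card_bij (fun q _ => (p.succAbove q.1, p.succAbove q.2))
    · rintro ⟨i, j⟩ hq
      obtain ⟨hij, hσ, hR⟩ := (Finset.mem_filter.mp hq).2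
      refine Finset.mem_filter.mpr ⟨Finset.mem_filter.mpr ⟨Finset.mem_univ _, ?_, ?_, ?_⟩,
        Fin.succAbove_ne p i⟩
      · exact Fin.succAbove_lt_succAbove_iff.mpr hij
      · rw [hws, hws]; exact Fin.castSucc_lt_castSucc_iff.mpr hσ
      · rwa [val_succAbove_s6, val_succAbove_s6]
    · rintro ⟨a, b⟩ ha ⟨c, d⟩ hc h
      rw [Prod.mk.injEq] at h ⊢
      exact ⟨Fin.succAbove_right_injective h.1, Fin.succAbove_right_injective h.2⟩
    · rintro ⟨a, b⟩ hq
      have hbne : b ≠ p := hsnd (a, b) (Finset.mem_filter.mp hq).1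
      have hane : a ≠ p := (Finset.mem_filter.mp hq).2
      obtain ⟨hq', _⟩ := Finset.mem_filter.mp hq
      obtain ⟨hij, hab, hR⟩ := (Finset.mem_filter.mp hq').2
      obtain ⟨i, rfl⟩ := Fin.exists_succAbove_eq hane
      obtain ⟨j, rfl⟩ := Fin.exists_succAbove_eq hbne
      refine ⟨(i, j), ?_, rfl⟩
      simp only [Finset.mem_filter, Finset.mem_univ, true_and]
      refine ⟨Fin.succAbove_lt_succAbove_iff.mp hij, ?_, ?_⟩
      · rw [hws, hws] at hab
        exact Fin.castSucc_lt_castSucc_iff.mp hab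
      · rwa [val_succAbove_s6, val_succAbove_s6] at hR
  rw [pstat, ← hsplit, h1, h2]

lemma psum_succ (m : ℕ) (R : ℕ → ℕ → Bool) :
    psum (m+1) R = ∑ p ∈ Finset.range (m+1),
      Polynomial.X ^ (cnt (m+1) R p) * psum m (fun i j => R (saN p i) (saN p j)) := by
  rw [psum, ← Fin.sum_univ_eq_sum_range
    (fun p => Polynomial.X ^ (cnt (m+1) R p) * psum m (fun i j => R (saN p i) (saN p j)))]
  rw [← Equiv.sum_comp (insE m) (fun w => Polynomial.X ^ pstat (m+1) R w)]
  rw [Fintype.sum_prod_type]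
  apply Finset.sum_congr rfl
  intro p _
  rw [psum, Finset.mul_sum]
  apply Finset.sum_congr rfl
  intro σ _
  rw [pstat_insE, pow_add]

lemma psum_congr (m : ℕ) (R R' : ℕ → ℕ → Bool)
    (hR : ∀ i j : ℕ, i < j → j < m → R i j = R' i j) : psum m R = psum m R' := by
  unfold psum
  apply Finset.sum_congr rfl
  intro w _
  congr 1
  unfold pstat
  congr 1
  apply Finset.filter_congr
  rintro ⟨a, b⟩ -
  by_cases hab : a < b
  · simp only [hab, true_and]
    rw [hR _ _ (by exact_mod_cast hab) b.isLt]
  · simp [hab]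

lemma pstat_conj (m : ℕ) (R : ℕ → ℕ → Bool) (w : Equiv.Perm (Fin m)) :
    pstat m R (Fin.revPerm * w * Fin.revPerm) =
      pstat m (fun i j => R (m - 1 - j) (m - 1 - i)) w := by
  unfold pstat
  symm
  apply Finset.card_nbij (fun q => (Fin.rev q.2, Fin.rev q.1))
  · rintro ⟨a, b⟩ hq
    simp only [Finset.mem_coe, Finset.mem_filter, Finset.mem_univ, true_and, Equiv.Perm.mul_apply,
      Fin.revPerm_apply, Fin.rev_rev] at hq ⊢
    obtain ⟨h1, h2, h3⟩ := hq
    refine ⟨Fin.rev_lt_rev.mpr h1, Fin.rev_lt_rev.mpr h2, ?_⟩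
    rw [show ((Fin.rev b : Fin m) : ℕ) = m - 1 - (b : ℕ) by rw [Fin.val_rev]; omega,
      show ((Fin.rev a : Fin m) : ℕ) = m - 1 - (a : ℕ) by rw [Fin.val_rev]; omega]
    exact h3
  · rintro ⟨a, b⟩ ha ⟨c, d⟩ hc h
    simp only [Prod.mk.injEq] at h
    rw [Prod.mk.injEq]
    exact ⟨Fin.rev_injective h.2, Fin.rev_injective h.1⟩
  · rintro ⟨a, b⟩ hq
    refine ⟨(Fin.rev b, Fin.rev a), ?_, by simp [Fin.rev_rev]⟩
    simp only [Finset.mem_coe, Finset.mem_filter, Finset.mem_univ, true_and,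
      Equiv.Perm.mul_apply, Fin.revPerm_apply, Fin.rev_rev] at hq ⊢
    obtain ⟨h1, h2, h3⟩ := hq
    refine ⟨Fin.rev_lt_rev.mpr h1, Fin.rev_lt_rev.mp h2, ?_⟩
    have hb := b.isLt
    have ha := a.isLt
    rw [show ((Fin.rev a : Fin m) : ℕ) = m - 1 - (a : ℕ) by rw [Fin.val_rev]; omega,
      show ((Fin.rev b : Fin m) : ℕ) = m - 1 - (b : ℕ) by rw [Fin.val_rev]; omega,
      show m - 1 - (m - 1 - (a : ℕ)) = (a : ℕ) by omega,
      show m - 1 - (m - 1 - (b : ℕ)) = (b : ℕ) by omega]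
    exact h3

lemma psum_rev (m : ℕ) (R : ℕ → ℕ → Bool) :
    psum m R = psum m (fun i j => R (m - 1 - j) (m - 1 - i)) := by
  unfold psum
  rw [← Equiv.sum_comp ((Equiv.mulLeft (Fin.revPerm (n := m))).trans
      (Equiv.mulRight (Fin.revPerm (n := m)))) (fun w => Polynomial.X ^ pstat m R w)]
  apply Finset.sum_congr rfl
  intro w _
  simp only [Equiv.trans_apply, Equiv.coe_mulLeft, Equiv.coe_mulRight]
  rw [pstat_conj m R w]

def Rfull : ℕ → ℕ → Bool := fun _ _ => true
def RU : ℕ → ℕ → Bool := fun i _ => decide (1 ≤ i)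
def RUp (m : ℕ) : ℕ → ℕ → Bool := fun _ j => decide (j + 2 ≤ m)
def RV (m : ℕ) : ℕ → ℕ → Bool := fun i j => decide (1 ≤ i ∧ j + 2 ≤ m)
def RQ : ℕ → ℕ → Bool := fun i j => decide (1 ≤ i ∨ j = 1)
def RQp (m : ℕ) : ℕ → ℕ → Bool := fun i j => decide (j + 2 ≤ m ∨ i + 2 = m)
def RT (m : ℕ) : ℕ → ℕ → Bool := fun i j => decide ((1 ≤ i ∧ j + 2 ≤ m) ∨ i + 2 = m)
def RTp (m : ℕ) : ℕ → ℕ → Bool := fun i j => decide ((1 ≤ i ∧ j + 2 ≤ m) ∨ j = 1)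
def RHs (n : ℕ) : ℕ → ℕ → Bool :=
  fun i j => decide ((i = 0 ∧ j = 1) ∨ (1 ≤ i ∧ (j + 2 ≤ n ∨ i + 2 = n)))

lemma cnt_eq (m : ℕ) (R : ℕ → ℕ → Bool) (p b : ℕ) (hb : b < m)
    (h : ∀ j, j < m → ((p < j ∧ R p j = true) ↔ (p < j ∧ j ≤ b))) :
    cnt m R p = b - p := by
  unfold cnt
  have heq : (Finset.range m).filter (fun j => p < j ∧ R p j = true) = Finset.Ioc p b := by
    ext j
    simp only [Finset.mem_filter, Finset.mem_range, Finset.mem_Ioc]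
    constructor
    · rintro ⟨hj, hc⟩
      exact (h j hj).mp hc
    · intro hc
      have hj : j < m := lt_of_le_of_lt hc.2 hb
      exact ⟨hj, (h j hj).mpr ⟨hc.1, hc.2⟩⟩
  rw [heq, Nat.card_Ioc]

lemma sum_geom (k : ℕ) (C : Polynomial ℤ) :
    ∑ p ∈ Finset.range k, Polynomial.X ^ (k - 1 - p) * C = qInt k * C := by
  rw [← Finset.sum_mul]
  congr 1
  rw [qInt]
  exact Finset.sum_range_reflect (fun i => Polynomial.X ^ i) k

lemma psum_zero (R : ℕ → ℕ → Bool) : psum 0 R = 1 := by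
  simp [psum, pstat]

lemma psum_one (R : ℕ → ℕ → Bool) : psum 1 R = 1 := by
  rw [psum]
  have h : ∀ w : Equiv.Perm (Fin 1), pstat 1 R w = 0 := by
    intro w
    unfold pstat
    rw [Finset.card_eq_zero, Finset.filter_eq_empty_iff]
    rintro ⟨a, b⟩ -
    simp [Subsingleton.elim a b]
  simp [h]

lemma L_full : ∀ m, psum m Rfull = qFact m := by
  intro m
  induction m with
  | zero => rw [psum_zero]; rfl
  | succ m ih =>
    rw [psum_succ]
    have hmain : ∀ p ∈ Finset.range (m+1),
        Polynomial.X ^ (cnt (m+1) Rfull p) * psum m (fun i j => Rfull (saN p i) (saN p j))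
        = Polynomial.X ^ (m + 1 - 1 - p) * qFact m := by
      intro p hp
      rw [cnt_eq (m+1) Rfull p m (by omega)
        (fun j hj => by simp only [Rfull]; simp; omega),
        psum_congr m (fun i j => Rfull (saN p i) (saN p j)) Rfull (fun i j _ _ => rfl), ih]
      norm_num
    rw [Finset.sum_congr rfl hmain, sum_geom, qFact]
    ring

lemma qInt_zero : qInt 0 = 0 := by simp [qInt]

lemma qInt_succ (m : ℕ) : qInt (m+1) = 1 + Polynomial.X * qInt m := by
  rw [qInt, Finset.sum_range_succ', pow_zero, qInt, Finset.mul_sum, add_comm]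
  congr 1
  exact Finset.sum_congr rfl (fun i _ => by rw [pow_succ, mul_comm])

lemma psum_false (m : ℕ) (R : ℕ → ℕ → Bool)
    (h : ∀ i j : ℕ, i < j → j < m → R i j = false) :
    psum m R = (Nat.factorial m : Polynomial ℤ) := by
  unfold psum
  have hz : ∀ w : Equiv.Perm (Fin m), pstat m R w = 0 := by
    intro w
    unfold pstat
    rw [Finset.card_eq_zero, Finset.filter_eq_empty_iff]
    rintro ⟨a, b⟩ -
    rintro ⟨h1, h2, h3⟩
    rw [h (a : ℕ) (b : ℕ) (by exact_mod_cast h1) b.isLt] at h3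
    exact absurd h3 (by simp)
  rw [Finset.sum_congr rfl (fun w _ => by rw [hz w, pow_zero]), Finset.sum_const,
    Finset.card_univ, Fintype.card_perm, Fintype.card_fin, nsmul_eq_mul, mul_one]

lemma L_Up : ∀ k, psum (k+1) (RUp (k+1)) = ((k+1 : ℕ) : Polynomial ℤ) * qFact k := by
  intro k
  induction k with
  | zero => rw [psum_one]; norm_num [qFact]
  | succ k ih =>
    rw [psum_succ, Finset.sum_range_succ]
    have hmain : ∀ p ∈ Finset.range (k+1),
        Polynomial.X ^ (cnt (k+2) (RUp (k+2)) p)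
          * psum (k+1) (fun i j => RUp (k+2) (saN p i) (saN p j))
        = Polynomial.X ^ (k + 1 - 1 - p) * (((k+1 : ℕ) : Polynomial ℤ) * qFact k) := by
      intro p hp
      have hpk := Finset.mem_range.mp hp
      rw [cnt_eq (k+2) (RUp (k+2)) p k (by omega)
        (fun j hj => by simp only [RUp, decide_eq_true_eq, or_true, true_or, and_true, true_and]; omega),
        psum_congr (k+1) (fun i j => RUp (k+2) (saN p i) (saN p j)) (RUp (k+1))
          (fun i j hij hjm => by
            simp only [RUp]; rw [decide_eq_decide]; simp only [saN]; split_ifs <;> omega),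
        ih]
      norm_num
    rw [Finset.sum_congr rfl hmain, sum_geom,
      cnt_eq (k+2) (RUp (k+2)) (k+1) k (by omega)
        (fun j hj => by simp only [RUp, decide_eq_true_eq, or_true, true_or, and_true, true_and]; omega),
      psum_congr (k+1) (fun i j => RUp (k+2) (saN (k+1) i) (saN (k+1) j)) Rfull
        (fun i j hij hjm => by
          simp only [RUp, Rfull, decide_eq_true_eq]; simp only [saN]
          split_ifs <;> omega),
      L_full (k+1), show k - (k+1) = 0 from by omega, pow_zero, one_mul,
      show qFact (k+1) = qFact k * qInt (k+1) from rfl]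
    push_cast
    ring

lemma L_U : ∀ k, psum (k+1) RU = ((k+1 : ℕ) : Polynomial ℤ) * qFact k := by
  intro k
  have h1 : psum (k+1) (RUp (k+1))
      = psum (k+1) (fun i j => RUp (k+1) (k+1-1-j) (k+1-1-i)) := psum_rev (k+1) (RUp (k+1))
  rw [psum_congr (k+1) (fun i j => RUp (k+1) (k+1-1-j) (k+1-1-i)) RU
    (fun i j hij hjm => by
      simp only [RUp, RU]; rw [decide_eq_decide]; omega)] at h1
  rw [← h1, L_Up]

lemma L_V : ∀ k, psum (k+2) (RV (k+2))
    = ((k+2 : ℕ) : Polynomial ℤ) * ((k+1 : ℕ) : Polynomial ℤ) * qFact k := by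
  intro k
  induction k with
  | zero =>
    rw [psum_succ, Finset.sum_range_succ, Finset.sum_range_succ, Finset.sum_range_zero,
      cnt_eq 2 (RV 2) 0 0 (by omega)
        (fun j hj => by simp only [RV, decide_eq_true_eq, or_true, true_or, and_true, true_and]; omega),
      cnt_eq 2 (RV 2) 1 0 (by omega)
        (fun j hj => by simp only [RV, decide_eq_true_eq, or_true, true_or, and_true, true_and]; omega),
      psum_one, psum_one]
    norm_num [qFact]
  | succ k ih =>
    rw [psum_succ, Finset.sum_range_succ, Finset.sum_range_succ']
    have hmain : ∀ p ∈ Finset.range (k+1),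
        Polynomial.X ^ (cnt (k+3) (RV (k+3)) (p+1))
          * psum (k+2) (fun i j => RV (k+3) (saN (p+1) i) (saN (p+1) j))
        = Polynomial.X ^ (k + 1 - 1 - p)
            * (((k+2 : ℕ) : Polynomial ℤ) * ((k+1 : ℕ) : Polynomial ℤ) * qFact k) := by
      intro p hp
      have hpk := Finset.mem_range.mp hp
      rw [cnt_eq (k+3) (RV (k+3)) (p+1) (k+1) (by omega)
        (fun j hj => by simp only [RV, decide_eq_true_eq, or_true, true_or, and_true, true_and]; omega),
        psum_congr (k+2) (fun i j => RV (k+3) (saN (p+1) i) (saN (p+1) j)) (RV (k+2))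
          (fun i j hij hjm => by
            simp only [RV]; rw [decide_eq_decide]; simp only [saN]; split_ifs <;> omega),
        ih, show k+1-(p+1) = k+1-1-p from by omega]
    rw [Finset.sum_congr rfl hmain, sum_geom,
      cnt_eq (k+3) (RV (k+3)) 0 0 (by omega)
        (fun j hj => by simp only [RV, decide_eq_true_eq, or_true, true_or, and_true, true_and]; omega),
      psum_congr (k+2) (fun i j => RV (k+3) (saN 0 i) (saN 0 j)) (RUp (k+2))
        (fun i j hij hjm => by
          simp only [RV, RUp]; rw [decide_eq_decide]; simp only [saN]; split_ifs <;> omega),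
      L_Up (k+1),
      cnt_eq (k+3) (RV (k+3)) (k+2) 0 (by omega)
        (fun j hj => by simp only [RV, decide_eq_true_eq, or_true, true_or, and_true, true_and]; omega),
      psum_congr (k+2) (fun i j => RV (k+3) (saN (k+2) i) (saN (k+2) j)) RU
        (fun i j hij hjm => by
          simp only [RV, RU]; rw [decide_eq_decide]; simp only [saN]; split_ifs <;> omega),
      L_U (k+1)]
    rw [show (0:ℕ) - 0 = 0 from rfl, show (0:ℕ) - (k+2) = 0 from by omega, pow_zero,
      show qFact (k+1) = qFact k * qInt (k+1) from rfl]
    push_cast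
    ring

lemma L_Qp : ∀ k, psum (k+2) (RQp (k+2))
    = (1 + Polynomial.X) * qFact (k+1)
      + ((k+1 : ℕ) : Polynomial ℤ) * Polynomial.X * qInt k * qFact k := by
  intro k
  induction k with
  | zero =>
    rw [psum_succ, Finset.sum_range_succ, Finset.sum_range_succ, Finset.sum_range_zero,
      cnt_eq 2 (RQp 2) 0 1 (by omega)
        (fun j hj => by simp only [RQp, decide_eq_true_eq, or_true, true_or, and_true, true_and]; omega),
      cnt_eq 2 (RQp 2) 1 1 (by omega)
        (fun j hj => by simp only [RQp, decide_eq_true_eq, or_true, true_or, and_true, true_and]; omega),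
      psum_one, psum_one]
    simp [qFact, qInt_zero, qInt_succ]
    ring
  | succ k ih =>
    rw [psum_succ, Finset.sum_range_succ, Finset.sum_range_succ]
    have hmain : ∀ p ∈ Finset.range (k+1),
        Polynomial.X ^ (cnt (k+3) (RQp (k+3)) p)
          * psum (k+2) (fun i j => RQp (k+3) (saN p i) (saN p j))
        = Polynomial.X ^ (k + 1 - 1 - p)
            * (Polynomial.X * ((1 + Polynomial.X) * qFact (k+1)
                + ((k+1 : ℕ) : Polynomial ℤ) * Polynomial.X * qInt k * qFact k)) := by
      intro p hp
      have hpk := Finset.mem_range.mp hp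
      rw [cnt_eq (k+3) (RQp (k+3)) p (k+1) (by omega)
        (fun j hj => by simp only [RQp, decide_eq_true_eq, or_true, true_or, and_true, true_and]; omega),
        psum_congr (k+2) (fun i j => RQp (k+3) (saN p i) (saN p j)) (RQp (k+2))
          (fun i j hij hjm => by
            simp only [RQp]; rw [decide_eq_decide]; simp only [saN]; split_ifs <;> omega),
        ih, show k+1-p = (k+1-1-p)+1 from by omega, pow_succ]
      ring
    rw [Finset.sum_congr rfl hmain, sum_geom,
      cnt_eq (k+3) (RQp (k+3)) (k+1) (k+2) (by omega)
        (fun j hj => by simp only [RQp, decide_eq_true_eq, or_true, true_or, and_true, true_and]; omega),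
      psum_congr (k+2) (fun i j => RQp (k+3) (saN (k+1) i) (saN (k+1) j)) (RUp (k+2))
        (fun i j hij hjm => by
          simp only [RQp, RUp]; rw [decide_eq_decide]; simp only [saN]; split_ifs <;> omega),
      L_Up (k+1),
      cnt_eq (k+3) (RQp (k+3)) (k+2) 0 (by omega)
        (fun j hj => by simp only [RQp, decide_eq_true_eq, or_true, true_or, and_true, true_and]; omega),
      psum_congr (k+2) (fun i j => RQp (k+3) (saN (k+2) i) (saN (k+2) j)) Rfull
        (fun i j hij hjm => by
          simp only [RQp, Rfull, decide_eq_true_eq]; simp only [saN]; split_ifs <;> omega),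
      L_full (k+2)]
    rw [show k+2-(k+1) = 1 from by omega, pow_one, show (0:ℕ)-(k+2) = 0 from by omega, pow_zero,
      one_mul,
      show qFact (k+2) = qFact k * qInt (k+1) * qInt (k+2) from rfl,
      show qFact (k+1) = qFact k * qInt (k+1) from rfl,
      show qInt (k+2) = 1 + Polynomial.X * qInt (k+1) from qInt_succ (k+1),
      show qInt (k+1) = 1 + Polynomial.X * qInt k from qInt_succ k]
    push_cast
    ring

lemma L_Q : ∀ k, psum (k+2) RQ
    = (1 + Polynomial.X) * qFact (k+1)
      + ((k+1 : ℕ) : Polynomial ℤ) * Polynomial.X * qInt k * qFact k := by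
  intro k
  have h1 : psum (k+2) (RQp (k+2))
      = psum (k+2) (fun i j => RQp (k+2) (k+2-1-j) (k+2-1-i)) := psum_rev (k+2) (RQp (k+2))
  rw [psum_congr (k+2) (fun i j => RQp (k+2) (k+2-1-j) (k+2-1-i)) RQ
    (fun i j hij hjm => by
      simp only [RQp, RQ]; rw [decide_eq_decide]; omega)] at h1
  rw [← h1, L_Qp]

lemma L_T : ∀ k, psum (k+3) (RT (k+3))
    = ((k+3 : ℕ) : Polynomial ℤ) * ((1 + Polynomial.X) * qFact (k+1)
        + ((k+1 : ℕ) : Polynomial ℤ) * Polynomial.X * qInt k * qFact k) := by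
  intro k
  induction k with
  | zero =>
    rw [psum_succ, Finset.sum_range_succ, Finset.sum_range_succ, Finset.sum_range_succ,
      Finset.sum_range_zero,
      cnt_eq 3 (RT 3) 0 0 (by omega)
        (fun j hj => by simp only [RT, decide_eq_true_eq, or_true, true_or, and_true, true_and]; omega),
      psum_congr 2 (fun i j => RT 3 (saN 0 i) (saN 0 j)) Rfull
        (fun i j hij hjm => by
          simp only [RT, Rfull, decide_eq_true_eq]; simp only [saN]; split_ifs <;> omega),
      L_full 2,
      cnt_eq 3 (RT 3) 1 2 (by omega)
        (fun j hj => by simp only [RT, decide_eq_true_eq, or_true, true_or, and_true, true_and]; omega),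
      psum_congr 2 (fun i j => RT 3 (saN 1 i) (saN 1 j)) (RV 2)
        (fun i j hij hjm => by
          simp only [RT, RV]; rw [decide_eq_decide]; simp only [saN]; split_ifs <;> omega),
      cnt_eq 3 (RT 3) 2 0 (by omega)
        (fun j hj => by simp only [RT, decide_eq_true_eq, or_true, true_or, and_true, true_and]; omega),
      psum_congr 2 (fun i j => RT 3 (saN 2 i) (saN 2 j)) (RV 2)
        (fun i j hij hjm => by
          simp only [RT, RV]; rw [decide_eq_decide]; simp only [saN]; split_ifs <;> omega),
      L_V 0]
    norm_num [qFact, qInt_succ, qInt_zero]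
    ring
  | succ k ih =>
    rw [psum_succ, Finset.sum_range_succ, Finset.sum_range_succ, Finset.sum_range_succ']
    have hmain : ∀ p ∈ Finset.range (k+1),
        Polynomial.X ^ (cnt (k+4) (RT (k+4)) (p+1))
          * psum (k+3) (fun i j => RT (k+4) (saN (p+1) i) (saN (p+1) j))
        = Polynomial.X ^ (k + 1 - 1 - p)
            * (Polynomial.X * (((k+3 : ℕ) : Polynomial ℤ) * ((1 + Polynomial.X) * qFact (k+1)
                + ((k+1 : ℕ) : Polynomial ℤ) * Polynomial.X * qInt k * qFact k))) := by
      intro p hp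
      have hpk := Finset.mem_range.mp hp
      rw [cnt_eq (k+4) (RT (k+4)) (p+1) (k+2) (by omega)
        (fun j hj => by simp only [RT, decide_eq_true_eq, or_true, true_or, and_true, true_and]; omega),
        psum_congr (k+3) (fun i j => RT (k+4) (saN (p+1) i) (saN (p+1) j)) (RT (k+3))
          (fun i j hij hjm => by
            simp only [RT]; rw [decide_eq_decide]; simp only [saN]; split_ifs <;> omega),
        ih, show k+2-(p+1) = (k+1-1-p)+1 from by omega, pow_succ]
      ring
    rw [Finset.sum_congr rfl hmain, sum_geom,
      cnt_eq (k+4) (RT (k+4)) 0 0 (by omega)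
        (fun j hj => by simp only [RT, decide_eq_true_eq, or_true, true_or, and_true, true_and]; omega),
      psum_congr (k+3) (fun i j => RT (k+4) (saN 0 i) (saN 0 j)) (RQp (k+3))
        (fun i j hij hjm => by
          simp only [RT, RQp]; rw [decide_eq_decide]; simp only [saN]; split_ifs <;> omega),
      L_Qp (k+1),
      cnt_eq (k+4) (RT (k+4)) (k+2) (k+3) (by omega)
        (fun j hj => by simp only [RT, decide_eq_true_eq, or_true, true_or, and_true, true_and]; omega),
      psum_congr (k+3) (fun i j => RT (k+4) (saN (k+2) i) (saN (k+2) j)) (RV (k+3))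
        (fun i j hij hjm => by
          simp only [RT, RV]; rw [decide_eq_decide]; simp only [saN]; split_ifs <;> omega),
      L_V (k+1),
      cnt_eq (k+4) (RT (k+4)) (k+3) 0 (by omega)
        (fun j hj => by simp only [RT, decide_eq_true_eq, or_true, true_or, and_true, true_and]; omega),
      psum_congr (k+3) (fun i j => RT (k+4) (saN (k+3) i) (saN (k+3) j)) RU
        (fun i j hij hjm => by
          simp only [RT, RU]; rw [decide_eq_decide]; simp only [saN]; split_ifs <;> omega),
      L_U (k+2)]
    rw [show (0:ℕ)-0 = 0 from rfl, pow_zero, one_mul,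
      show k+3-(k+2) = 1 from by omega, pow_one,
      show (0:ℕ)-(k+3) = 0 from by omega, pow_zero, one_mul,
      show qFact (k+2) = qFact k * qInt (k+1) * qInt (k+2) from rfl,
      show qFact (k+1) = qFact k * qInt (k+1) from rfl,
      show qInt (k+2) = 1 + Polynomial.X * qInt (k+1) from qInt_succ (k+1),
      show qInt (k+1) = 1 + Polynomial.X * qInt k from qInt_succ k]
    push_cast
    ring

lemma L_Tp : ∀ k, psum (k+3) (RTp (k+3))
    = ((k+3 : ℕ) : Polynomial ℤ) * ((1 + Polynomial.X) * qFact (k+1)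
        + ((k+1 : ℕ) : Polynomial ℤ) * Polynomial.X * qInt k * qFact k) := by
  intro k
  have h1 : psum (k+3) (RT (k+3))
      = psum (k+3) (fun i j => RT (k+3) (k+3-1-j) (k+3-1-i)) := psum_rev (k+3) (RT (k+3))
  rw [psum_congr (k+3) (fun i j => RT (k+3) (k+3-1-j) (k+3-1-i)) (RTp (k+3))
    (fun i j hij hjm => by
      simp only [RT, RTp]; rw [decide_eq_decide]; omega)] at h1
  rw [← h1, L_T]

lemma Poin_eq (n : ℕ) (h : Fin n → Fin n)
    (hval : ∀ j : Fin n, (h j : ℕ) =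
      if (j : ℕ) = 0 then 1 else if (j : ℕ) + 2 < n then n - 2 else n - 1) :
    Poin h = psum n (RHs n) := by
  unfold Poin psum
  apply Finset.sum_congr rfl
  intro w _
  congr 1
  unfold ellh pstat
  congr 1
  apply Finset.filter_congr
  rintro ⟨a, b⟩ -
  by_cases hab : a < b
  · simp only [hab, true_and]
    apply and_congr_right
    intro _
    have hb := b.isLt
    have hab' : (a : ℕ) < (b : ℕ) := hab
    rw [Fin.le_def, hval a]
    simp only [RHs, decide_eq_true_eq]
    split_ifs <;> omega
  · simp [hab]


/-- for `n ≥ 5`, with `h = h_n = (2, n−1, …, n−1, n, n)` on `[n]` and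
`h' = h_{n−1}` on `[n−1]` (both described 0-based by the `if` expressions below),
writing `P_n = P_{h_n}`:
`P_n(q) = (1+q)² [n−2]_q! + (n−2)(q+q²)[n−3]_q [n−3]_q!`
`        + (n−1)(q+q^{n−3}) { (1+q)[n−3]_q! + (n−3) q [n−4]_q [n−4]_q! }`
`        + (q + q² + ⋯ + q^{n−4}) P_{n−1}(q)`,
where `q + ⋯ + q^{n−4} = q·[n−4]_q`. -/
theorem poincare_hn_recurrence (n : ℕ) (hn : 5 ≤ n)
    (h : Fin n → Fin n)
    (hval : ∀ j : Fin n, (h j : ℕ) =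
      if (j : ℕ) = 0 then 1 else if (j : ℕ) + 2 < n then n - 2 else n - 1)
    (h' : Fin (n - 1) → Fin (n - 1))
    (hval' : ∀ j : Fin (n - 1), (h' j : ℕ) =
      if (j : ℕ) = 0 then 1 else if (j : ℕ) + 2 < n - 1 then n - 3 else n - 2) :
    Poin h =
      (1 + Polynomial.X) ^ 2 * qFact (n - 2)
      + ((n - 2 : ℕ) : Polynomial ℤ) * (Polynomial.X + Polynomial.X ^ 2)
          * qInt (n - 3) * qFact (n - 3)
      + ((n - 1 : ℕ) : Polynomial ℤ) * (Polynomial.X + Polynomial.X ^ (n - 3))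
          * ((1 + Polynomial.X) * qFact (n - 3)
             + ((n - 3 : ℕ) : Polynomial ℤ) * Polynomial.X * qInt (n - 4) * qFact (n - 4))
      + Polynomial.X * qInt (n - 4) * Poin h' := by
  obtain ⟨k, rfl⟩ : ∃ k, n = k + 5 := ⟨n - 5, by omega⟩
  have hPh : Poin h = psum (k+5) (RHs (k+5)) := Poin_eq (k+5) h hval
  have hPh' : Poin h' = psum (k+4) (RHs (k+4)) := by
    apply Poin_eq (k+4) h'
    intro j
    rw [hval' j]
    simp only [show k+5-1 = k+4 from by omega, show k+5-3 = k+2 from by omega,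
      show k+5-2 = k+3 from by omega, show k+4-2 = k+2 from by omega,
      show k+4-1 = k+3 from by omega]
  rw [hPh, psum_succ, Finset.sum_range_succ, Finset.sum_range_succ,
    Finset.sum_range_succ', Finset.sum_range_succ']
  have hmain : ∀ p ∈ Finset.range (k+1),
      Polynomial.X ^ (cnt (k+5) (RHs (k+5)) (p+1+1))
        * psum (k+4) (fun i j => RHs (k+5) (saN (p+1+1) i) (saN (p+1+1) j))
      = Polynomial.X ^ (k + 1 - 1 - p) * (Polynomial.X * Poin h') := by
    intro p hp
    have hpk := Finset.mem_range.mp hp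
    rw [cnt_eq (k+5) (RHs (k+5)) (p+1+1) (k+3) (by omega)
      (fun j hj => by simp only [RHs, decide_eq_true_eq, or_true, true_or, and_true, true_and]; omega),
      psum_congr (k+4) (fun i j => RHs (k+5) (saN (p+1+1) i) (saN (p+1+1) j)) (RHs (k+4))
        (fun i j hij hjm => by
          simp only [RHs]; rw [decide_eq_decide]; simp only [saN]; split_ifs <;> omega),
      ← hPh', show k+3-(p+1+1) = (k+1-1-p)+1 from by omega, pow_succ]
    ring
  rw [Finset.sum_congr rfl hmain, sum_geom,
    cnt_eq (k+5) (RHs (k+5)) (0+1) (k+3) (by omega)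
      (fun j hj => by simp only [RHs, decide_eq_true_eq, or_true, true_or, and_true, true_and]; omega),
    psum_congr (k+4) (fun i j => RHs (k+5) (saN (0+1) i) (saN (0+1) j)) (RT (k+4))
      (fun i j hij hjm => by
        simp only [RHs, RT]; rw [decide_eq_decide]; simp only [saN]; split_ifs <;> omega),
    show psum (k+4) (RT (k+4)) = ((k+4 : ℕ) : Polynomial ℤ)
        * ((1 + Polynomial.X) * qFact (k+2)
          + ((k+2 : ℕ) : Polynomial ℤ) * Polynomial.X * qInt (k+1) * qFact (k+1))
      from L_T (k+1),
    cnt_eq (k+5) (RHs (k+5)) 0 1 (by omega)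
      (fun j hj => by simp only [RHs, decide_eq_true_eq, or_true, true_or, and_true, true_and]; omega),
    psum_congr (k+4) (fun i j => RHs (k+5) (saN 0 i) (saN 0 j)) (RQp (k+4))
      (fun i j hij hjm => by
        simp only [RHs, RQp]; rw [decide_eq_decide]; simp only [saN]; split_ifs <;> omega),
    show psum (k+4) (RQp (k+4)) = (1 + Polynomial.X) * qFact (k+3)
        + ((k+3 : ℕ) : Polynomial ℤ) * Polynomial.X * qInt (k+2) * qFact (k+2)
      from L_Qp (k+2),
    cnt_eq (k+5) (RHs (k+5)) (k+3) (k+4) (by omega)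
      (fun j hj => by simp only [RHs, decide_eq_true_eq, or_true, true_or, and_true, true_and]; omega),
    psum_congr (k+4) (fun i j => RHs (k+5) (saN (k+3) i) (saN (k+3) j)) (RTp (k+4))
      (fun i j hij hjm => by
        simp only [RHs, RTp]; rw [decide_eq_decide]; simp only [saN]; split_ifs <;> omega),
    show psum (k+4) (RTp (k+4)) = ((k+4 : ℕ) : Polynomial ℤ)
        * ((1 + Polynomial.X) * qFact (k+2)
          + ((k+2 : ℕ) : Polynomial ℤ) * Polynomial.X * qInt (k+1) * qFact (k+1))
      from L_Tp (k+1),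
    cnt_eq (k+5) (RHs (k+5)) (k+4) 0 (by omega)
      (fun j hj => by simp only [RHs, decide_eq_true_eq, or_true, true_or, and_true, true_and]; omega),
    psum_congr (k+4) (fun i j => RHs (k+5) (saN (k+4) i) (saN (k+4) j)) RQ
      (fun i j hij hjm => by
        simp only [RHs, RQ]; rw [decide_eq_decide]; simp only [saN]; split_ifs <;> omega),
    show psum (k+4) RQ = (1 + Polynomial.X) * qFact (k+3)
        + ((k+3 : ℕ) : Polynomial ℤ) * Polynomial.X * qInt (k+2) * qFact (k+2)
      from L_Q (k+2)]
  rw [show k+3-(0+1) = k+2 from by omega, show (1:ℕ)-0 = 1 from rfl, pow_one,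
    show k+4-(k+3) = 1 from by omega, show (0:ℕ)-(k+4) = 0 from by omega, pow_zero, one_mul,
    show k+5-2 = k+3 from by omega, show k+5-3 = k+2 from by omega,
    show k+5-4 = k+1 from by omega]
  push_cast
  ring
end

section
/- For n ≥ 4, writing P_n(q) = P_{h_n}(q) and Q_n(q) = (1 + 2nq + n(n−1)q²)[n−2]_q! + (n(n−3)/2) q^{n−3}, one has P_n(q) ≡ Q_n(q) modulo the ideal (q^{n−2}) of ℤ[q]; that is, P_n(q) and Q_n(q) have the same coefficients in degrees 0, 1, …, n−3. -/
open Finset Polynomial Equiv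

/-- prepend a value: w 0 = p, w (i+1) = p.succAbove (σ i) -/
noncomputable def consPerm {k : ℕ} (p : Fin (k+1)) (σ : Equiv.Perm (Fin k)) : Equiv.Perm (Fin (k+1)) :=
  Equiv.ofBijective (Fin.cons p (fun i => p.succAbove (σ i)))
    (Finite.injective_iff_bijective.mp (by
      intro x y hxy
      induction x using Fin.cases <;> induction y using Fin.cases <;>
        simp only [Fin.cons_zero, Fin.cons_succ] at hxy
      · rfl
      · exact absurd hxy.symm (Fin.succAbove_ne _ _)
      · exact absurd hxy (Fin.succAbove_ne _ _)
      · rw [Fin.succAbove_right_inj] at hxy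
        rw [σ.injective hxy]))

@[simp] lemma consPerm_zero {k : ℕ} (p : Fin (k+1)) (σ : Equiv.Perm (Fin k)) :
    consPerm p σ 0 = p := rfl

@[simp] lemma consPerm_succ {k : ℕ} (p : Fin (k+1)) (σ : Equiv.Perm (Fin k)) (i : Fin k) :
    consPerm p σ i.succ = p.succAbove (σ i) := by
  simp [consPerm, Equiv.ofBijective]

/-- append a value: w last = b, w i.castSucc = b.succAbove (σ i) -/
noncomputable def snocPerm {k : ℕ} (b : Fin (k+1)) (σ : Equiv.Perm (Fin k)) : Equiv.Perm (Fin (k+1)) :=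
  Equiv.ofBijective (Fin.snoc (fun i => b.succAbove (σ i)) b)
    (Finite.injective_iff_bijective.mp (by
      intro x y hxy
      induction x using Fin.lastCases <;> induction y using Fin.lastCases <;>
        simp only [Fin.snoc_last, Fin.snoc_castSucc] at hxy
      · rfl
      · exact absurd hxy.symm (Fin.succAbove_ne _ _)
      · exact absurd hxy (Fin.succAbove_ne _ _)
      · rw [Fin.succAbove_right_inj] at hxy
        rw [σ.injective hxy]))

@[simp] lemma snocPerm_last {k : ℕ} (b : Fin (k+1)) (σ : Equiv.Perm (Fin k)) :
    snocPerm b σ (Fin.last k) = b := by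
  simp [snocPerm, Equiv.ofBijective]

@[simp] lemma snocPerm_castSucc {k : ℕ} (b : Fin (k+1)) (σ : Equiv.Perm (Fin k)) (i : Fin k) :
    snocPerm b σ i.castSucc = b.succAbove (σ i) := by
  simp [snocPerm, Equiv.ofBijective]

lemma sum_perm_cons {k : ℕ} (f : Equiv.Perm (Fin (k+1)) → Polynomial ℤ) :
    ∑ w : Equiv.Perm (Fin (k+1)), f w
      = ∑ p : Fin (k+1), ∑ σ : Equiv.Perm (Fin k), f (consPerm p σ) := by
  have hb : Function.Bijective (fun x : Fin (k+1) × Equiv.Perm (Fin k) => consPerm x.1 x.2) := ?_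
  · calc ∑ w : Equiv.Perm (Fin (k+1)), f w
        = ∑ x : Fin (k+1) × Equiv.Perm (Fin k), f (consPerm x.1 x.2) :=
          (Fintype.sum_bijective _ hb _ _ (fun x => rfl)).symm
      _ = _ := Fintype.sum_prod_type _
  rw [Fintype.bijective_iff_injective_and_card]
  constructor
  · rintro ⟨p, σ⟩ ⟨p', σ'⟩ hx
    have h0 : p = p' := by
      have := congrArg (fun w : Equiv.Perm (Fin (k+1)) => w 0) hx
      simpa using this
    have h1 : σ = σ' := by
      ext i
      have := congrArg (fun w : Equiv.Perm (Fin (k+1)) => w i.succ) hx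
      simp only [consPerm_succ, h0] at this
      exact congrArg _ (Fin.succAbove_right_injective this)
    rw [h0, h1]
  · simp [Fintype.card_perm, Nat.factorial_succ]

lemma sum_perm_snoc {k : ℕ} (f : Equiv.Perm (Fin (k+1)) → Polynomial ℤ) :
    ∑ w : Equiv.Perm (Fin (k+1)), f w
      = ∑ b : Fin (k+1), ∑ σ : Equiv.Perm (Fin k), f (snocPerm b σ) := by
  have hb : Function.Bijective (fun x : Fin (k+1) × Equiv.Perm (Fin k) => snocPerm x.1 x.2) := ?_
  · calc ∑ w : Equiv.Perm (Fin (k+1)), f w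
        = ∑ x : Fin (k+1) × Equiv.Perm (Fin k), f (snocPerm x.1 x.2) :=
          (Fintype.sum_bijective _ hb _ _ (fun x => rfl)).symm
      _ = _ := Fintype.sum_prod_type _
  rw [Fintype.bijective_iff_injective_and_card]
  constructor
  · rintro ⟨p, σ⟩ ⟨p', σ'⟩ hx
    have h0 : p = p' := by
      have := congrArg (fun w : Equiv.Perm (Fin (k+1)) => w (Fin.last k)) hx
      simpa using this
    have h1 : σ = σ' := by
      ext i
      have := congrArg (fun w : Equiv.Perm (Fin (k+1)) => w i.castSucc) hx
      simp only [snocPerm_castSucc, h0] at this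
      exact congrArg _ (Fin.succAbove_right_injective this)
    rw [h0, h1]
  · simp [Fintype.card_perm, Nat.factorial_succ]

def invP {k : ℕ} (σ : Equiv.Perm (Fin k)) : ℕ :=
  (Finset.univ.filter (fun x : Fin k × Fin k => x.1 < x.2 ∧ σ x.2 < σ x.1)).card

lemma sum_range_ite_lt (k a : ℕ) :
    (∑ x ∈ Finset.range k, if x < a then (1:ℕ) else 0) = min a k := by
  induction k with
  | zero => simp
  | succ k ih =>
    rw [Finset.sum_range_succ, ih]
    split_ifs <;> omega

lemma sum_ite_lt_fin (k a : ℕ) (ha : a ≤ k) :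
    ∑ v : Fin k, (if (v : ℕ) < a then 1 else 0) = a := by
  rw [Fin.sum_univ_eq_sum_range (fun v => if v < a then 1 else 0), sum_range_ite_lt]
  omega

lemma sum_ite_ge_fin (k a : ℕ) (ha : a ≤ k) :
    ∑ v : Fin k, (if a ≤ (v : ℕ) then 1 else 0) = k - a := by
  have h1 : ∀ v : Fin k, (if a ≤ (v:ℕ) then (1:ℕ) else 0) = 1 - (if (v:ℕ) < a then 1 else 0) := by
    intro v; split_ifs <;> omega
  calc ∑ v : Fin k, (if a ≤ (v : ℕ) then 1 else 0)
      = ∑ v : Fin k, (1 - (if (v:ℕ) < a then 1 else 0)) := by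
        exact Finset.sum_congr rfl (fun v _ => h1 v)
    _ = k - a := by
        rw [Finset.sum_tsub_distrib]
        · simp [sum_ite_lt_fin k a ha]
        · intro v _; split_ifs <;> omega

lemma invP_card_eq_sum {k : ℕ} (σ : Equiv.Perm (Fin k)) :
    invP σ = ∑ x : Fin k, ∑ y : Fin k, (if x < y ∧ σ y < σ x then 1 else 0) := by
  rw [invP, Finset.card_filter, Fintype.sum_prod_type]

lemma invP_consPerm {k : ℕ} (A : Fin (k+1)) (σ : Equiv.Perm (Fin k)) :
    invP (consPerm A σ) = (A : ℕ) + invP σ := by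
  rw [invP_card_eq_sum, Fin.sum_univ_succ]
  have e1 : (∑ y : Fin (k+1),
      if (0 : Fin (k+1)) < y ∧ consPerm A σ y < consPerm A σ 0 then (1:ℕ) else 0) = (A:ℕ) := by
    rw [Fin.sum_univ_succ]
    simp only [lt_self_iff_false, false_and, if_false, consPerm_succ, consPerm_zero,
      Fin.succ_pos, true_and, Fin.succAbove_lt_iff_castSucc_lt, zero_add]
    simp only [Fin.lt_def, Fin.coe_castSucc]
    rw [Equiv.sum_comp σ (fun v => if (v:ℕ) < (A:ℕ) then (1:ℕ) else 0)]
    exact sum_ite_lt_fin k A (Nat.lt_succ_iff.mp A.isLt)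
  have e2 : ∀ j : Fin k, (∑ y : Fin (k+1),
      if Fin.succ j < y ∧ consPerm A σ y < consPerm A σ (Fin.succ j) then (1:ℕ) else 0)
      = ∑ i : Fin k, if j < i ∧ σ i < σ j then 1 else 0 := by
    intro j
    rw [Fin.sum_univ_succ]
    simp only [Fin.not_lt_zero, false_and, if_false, consPerm_succ, Fin.succ_lt_succ_iff,
      Fin.succAbove_lt_succAbove_iff, zero_add]
  rw [e1, Finset.sum_congr rfl (fun j _ => e2 j), invP_card_eq_sum]

lemma invP_snocPerm {k : ℕ} (b : Fin (k+1)) (σ : Equiv.Perm (Fin k)) :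
    invP (snocPerm b σ) = (k - (b : ℕ)) + invP σ := by
  rw [invP_card_eq_sum, Fin.sum_univ_castSucc]
  have elast : (∑ y : Fin (k+1),
      if Fin.last k < y ∧ snocPerm b σ y < snocPerm b σ (Fin.last k) then (1:ℕ) else 0) = 0 := by
    apply Finset.sum_eq_zero
    intro y _
    have : ¬ (Fin.last k < y) := by
      simp [Fin.lt_def]
      omega
    simp [this]
  have e2 : ∀ j : Fin k, (∑ y : Fin (k+1),
      if Fin.castSucc j < y ∧ snocPerm b σ y < snocPerm b σ (Fin.castSucc j) then (1:ℕ) else 0)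
      = (if (b:ℕ) ≤ (σ j : ℕ) then 1 else 0) + ∑ i : Fin k, if j < i ∧ σ i < σ j then 1 else 0 := by
    intro j
    rw [Fin.sum_univ_castSucc]
    simp only [snocPerm_castSucc, snocPerm_last, Fin.castSucc_lt_castSucc_iff,
      Fin.succAbove_lt_succAbove_iff, Fin.castSucc_lt_last, true_and,
      Fin.lt_succAbove_iff_le_castSucc, Fin.le_def, Fin.coe_castSucc]
    ring
  rw [elast, Finset.sum_congr rfl (fun j _ => e2 j), Finset.sum_add_distrib]
  have : (∑ j : Fin k, if (b:ℕ) ≤ (σ j:ℕ) then (1:ℕ) else 0) = k - (b:ℕ) := by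
    rw [Equiv.sum_comp σ (fun v => if (b:ℕ) ≤ (v:ℕ) then (1:ℕ) else 0)]
    exact sum_ite_ge_fin k b (Nat.lt_succ_iff.mp b.isLt)
  rw [this, invP_card_eq_sum]
  ring

lemma sum_X_pow_fin (k : ℕ) : ∑ p : Fin k, (Polynomial.X : Polynomial ℤ) ^ (p : ℕ) = qInt k := by
  rw [qInt, Fin.sum_univ_eq_sum_range]

lemma sum_invP_X (k : ℕ) :
    ∑ σ : Equiv.Perm (Fin k), (Polynomial.X : Polynomial ℤ) ^ invP σ = qFact k := by
  induction k with
  | zero =>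
    have h0 : ∀ σ : Equiv.Perm (Fin 0), invP σ = 0 := by
      intro σ; simp [invP]
    simp only [h0, pow_zero]
    rw [Finset.sum_const, Finset.card_univ, Fintype.card_perm]
    simp [qFact]
  | succ k ih =>
    rw [sum_perm_cons (fun w => (Polynomial.X : Polynomial ℤ) ^ invP w)]
    have : ∀ p : Fin (k+1), ∀ σ : Equiv.Perm (Fin k),
        (Polynomial.X : Polynomial ℤ) ^ invP (consPerm p σ)
        = Polynomial.X ^ (p:ℕ) * Polynomial.X ^ invP σ := by
      intro p σ; rw [invP_consPerm, pow_add]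
    calc ∑ p : Fin (k+1), ∑ σ : Equiv.Perm (Fin k),
          (Polynomial.X : Polynomial ℤ) ^ invP (consPerm p σ)
        = ∑ p : Fin (k+1), ∑ σ : Equiv.Perm (Fin k),
          (Polynomial.X : Polynomial ℤ) ^ (p:ℕ) * Polynomial.X ^ invP σ := by
          exact Finset.sum_congr rfl (fun p _ => Finset.sum_congr rfl (fun σ _ => this p σ))
      _ = (∑ p : Fin (k+1), (Polynomial.X : Polynomial ℤ) ^ (p:ℕ))
            * ∑ σ : Equiv.Perm (Fin k), (Polynomial.X:Polynomial ℤ) ^ invP σ := by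
          rw [Finset.sum_mul]
          exact Finset.sum_congr rfl (fun p _ => (Finset.mul_sum _ _ _).symm)
      _ = qFact (k+1) := by rw [sum_X_pow_fin, ih, qFact]; ring
-- PART C (appended to main.lean after it works)
def stat1 (M : ℕ) (τ : Equiv.Perm (Fin (M+3))) : ℕ :=
  ∑ x : Fin (M+3), ∑ y : Fin (M+3),
    if x < y ∧ τ y < τ x ∧ ((y:ℕ) < M+2 ∨ M+2 ≤ (x:ℕ)+1) then 1 else 0

lemma ellh_card_eq_sum {n : ℕ} (h : Fin n → Fin n) (w : Equiv.Perm (Fin n)) :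
    ellh h w = ∑ x : Fin n, ∑ y : Fin n, (if x < y ∧ w y < w x ∧ y ≤ h x then 1 else 0) := by
  rw [ellh, Finset.card_filter, Fintype.sum_prod_type]

lemma ellh_consPerm (M : ℕ) (h : Fin (M+4) → Fin (M+4))
    (hval : ∀ j : Fin (M+4), (h j : ℕ) =
      if (j : ℕ) = 0 then 1 else if (j:ℕ)+2 < M+4 then M+2 else M+3)
    (p : Fin (M+4)) (τ : Equiv.Perm (Fin (M+3))) :
    ellh h (consPerm p τ) = (if (τ 0 : ℕ) < (p:ℕ) then 1 else 0) + stat1 M τ := by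
  have hv0 : (h 0 : ℕ) = 1 := by rw [hval 0]; simp
  rw [ellh_card_eq_sum, Fin.sum_univ_succ]
  have e1 : (∑ y : Fin (M+4),
      if (0 : Fin (M+4)) < y ∧ consPerm p τ y < consPerm p τ 0 ∧ y ≤ h 0 then (1:ℕ) else 0)
      = (if (τ 0 : ℕ) < (p:ℕ) then 1 else 0) := by
    rw [Fin.sum_univ_succ]
    have t0 : ((if (0:Fin (M+4)) < (0:Fin (M+4)) ∧ consPerm p τ 0 < consPerm p τ 0
        ∧ (0:Fin (M+4)) ≤ h 0 then (1:ℕ) else 0)) = 0 := by simp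
    rw [t0, zero_add]
    have t1 : ∀ i : Fin (M+3),
        (if (0 : Fin (M+4)) < i.succ ∧ consPerm p τ i.succ < consPerm p τ 0 ∧ i.succ ≤ h 0
          then (1:ℕ) else 0)
        = if i = 0 then (if (τ 0 : ℕ) < (p:ℕ) then 1 else 0) else 0 := by
      intro i
      by_cases hi : i = 0
      · subst hi
        rw [if_pos rfl]
        refine if_congr ?_ rfl rfl
        simp only [consPerm_succ, consPerm_zero, Fin.succ_pos, true_and,
          Fin.succAbove_lt_iff_castSucc_lt]
        constructor
        · rintro ⟨h1, -⟩
          simpa [Fin.lt_def] using h1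
        · intro h1
          refine ⟨by simpa [Fin.lt_def] using h1, ?_⟩
          rw [Fin.le_def, hv0, Fin.val_succ]
          simp
      · rw [if_neg hi, if_neg]
        rintro ⟨-, -, h3⟩
        rw [Fin.le_def, hv0, Fin.val_succ] at h3
        exact hi (by ext; simp only [Fin.val_zero]; omega)
    rw [Finset.sum_congr rfl (fun i _ => t1 i), Finset.sum_ite_eq' Finset.univ 0]
    simp
  have e2 : ∀ j : Fin (M+3), (∑ y : Fin (M+4),
      if Fin.succ j < y ∧ consPerm p τ y < consPerm p τ j.succ ∧ y ≤ h j.succ then (1:ℕ) else 0)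
      = ∑ i : Fin (M+3), if j < i ∧ τ i < τ j ∧ ((i:ℕ) < M+2 ∨ M+2 ≤ (j:ℕ)+1) then 1 else 0 := by
    intro j
    rw [Fin.sum_univ_succ]
    have t0 : ((if Fin.succ j < (0:Fin (M+4)) ∧ consPerm p τ 0 < consPerm p τ j.succ
        ∧ (0:Fin (M+4)) ≤ h j.succ then (1:ℕ) else 0)) = 0 := by simp
    rw [t0, zero_add]
    refine Finset.sum_congr rfl (fun i _ => ?_)
    refine if_congr ?_ rfl rfl
    have hv : (h j.succ : ℕ) = if (j:ℕ)+1+2 < M+4 then M+2 else M+3 := by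
      rw [hval j.succ]
      simp [Fin.val_succ]
    simp only [consPerm_succ, Fin.succ_lt_succ_iff, Fin.succAbove_lt_succAbove_iff]
    refine and_congr_right (fun _ => and_congr_right (fun _ => ?_))
    rw [Fin.le_def, hv, Fin.val_succ]
    have hi := i.isLt
    constructor
    · intro h3; split_ifs at h3 <;> omega
    · intro h3; split_ifs <;> omega
  rw [e1, Finset.sum_congr rfl (fun j _ => e2 j), stat1]

lemma stat1_snocPerm (M : ℕ) (b : Fin (M+3)) (σ : Equiv.Perm (Fin (M+2))) :
    stat1 M (snocPerm b σ)
      = (if (b:ℕ) ≤ (σ (Fin.last (M+1)) : ℕ) then 1 else 0) + invP σ := by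
  rw [stat1, Fin.sum_univ_castSucc]
  have elast : (∑ y : Fin (M+3), if Fin.last (M+2) < y ∧ snocPerm b σ y < snocPerm b σ (Fin.last (M+2))
      ∧ ((y:ℕ) < M+2 ∨ M+2 ≤ ((Fin.last (M+2)):ℕ)+1) then (1:ℕ) else 0) = 0 := by
    apply Finset.sum_eq_zero
    intro y _
    have : ¬ (Fin.last (M+2) < y) := by simp [Fin.lt_def]; omega
    simp [this]
  have e2 : ∀ j : Fin (M+2), (∑ y : Fin (M+3),
      if Fin.castSucc j < y ∧ snocPerm b σ y < snocPerm b σ j.castSucc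
        ∧ ((y:ℕ) < M+2 ∨ M+2 ≤ ((Fin.castSucc j):ℕ)+1) then (1:ℕ) else 0)
      = (if j = Fin.last (M+1) then (if (b:ℕ) ≤ (σ (Fin.last (M+1)) : ℕ) then 1 else 0) else 0)
        + ∑ i : Fin (M+2), if j < i ∧ σ i < σ j then 1 else 0 := by
    intro j
    rw [Fin.sum_univ_castSucc]
    have tcast : ∀ i : Fin (M+2),
        (if Fin.castSucc j < i.castSucc ∧ snocPerm b σ i.castSucc < snocPerm b σ j.castSucc
          ∧ ((i.castSucc:ℕ) < M+2 ∨ M+2 ≤ ((Fin.castSucc j):ℕ)+1) then (1:ℕ) else 0)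
        = if j < i ∧ σ i < σ j then 1 else 0 := by
      intro i
      refine if_congr ?_ rfl rfl
      simp only [snocPerm_castSucc, Fin.castSucc_lt_castSucc_iff,
        Fin.succAbove_lt_succAbove_iff, Fin.coe_castSucc]
      have := i.isLt
      constructor
      · rintro ⟨h1, h2, -⟩; exact ⟨h1, h2⟩
      · rintro ⟨h1, h2⟩; exact ⟨h1, h2, Or.inl (by omega)⟩
    have tlast : (if Fin.castSucc j < Fin.last (M+2)
          ∧ snocPerm b σ (Fin.last (M+2)) < snocPerm b σ j.castSucc
          ∧ (((Fin.last (M+2)):ℕ) < M+2 ∨ M+2 ≤ ((Fin.castSucc j):ℕ)+1) then (1:ℕ) else 0)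
        = if j = Fin.last (M+1) then (if (b:ℕ) ≤ (σ (Fin.last (M+1)) : ℕ) then 1 else 0) else 0 := by
      by_cases hj : j = Fin.last (M+1)
      · subst hj
        rw [if_pos rfl]
        refine if_congr ?_ rfl rfl
        simp only [snocPerm_castSucc, snocPerm_last, Fin.castSucc_lt_last, true_and,
          Fin.lt_succAbove_iff_le_castSucc, Fin.le_def, Fin.coe_castSucc, Fin.val_last]
        constructor
        · rintro ⟨h1, -⟩; exact h1
        · intro h1; exact ⟨h1, Or.inr (by omega)⟩
      · rw [if_neg hj, if_neg]
        rintro ⟨-, -, h3⟩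
        rcases h3 with h3 | h3
        · rw [Fin.val_last] at h3; omega
        · rw [Fin.coe_castSucc] at h3
          have := j.isLt
          exact hj (by ext; simp [Fin.val_last]; omega)
    rw [tlast, Finset.sum_congr rfl (fun i _ => tcast i)]
    ring
  rw [elast, Finset.sum_congr rfl (fun j _ => e2 j), Finset.sum_add_distrib,
    Finset.sum_ite_eq' Finset.univ (Fin.last (M+1))]
  simp [invP_card_eq_sum σ]

lemma succAbove_val {k : ℕ} (b : Fin (k+1)) (A : Fin k) :
    (b.succAbove A : ℕ) = (A:ℕ) + (if (b:ℕ) ≤ (A:ℕ) then 1 else 0) := by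
  rcases lt_or_ge (Fin.castSucc A) b with hc | hc
  · rw [Fin.succAbove_of_castSucc_lt _ _ hc]
    rw [Fin.lt_def, Fin.coe_castSucc] at hc
    rw [Fin.coe_castSucc, if_neg (by omega)]
    omega
  · rw [Fin.succAbove_of_le_castSucc _ _ hc]
    rw [Fin.le_def, Fin.coe_castSucc] at hc
    rw [Fin.val_succ, if_pos (by omega)]

def EE (M p b A B' : ℕ) : ℕ :=
  (if A + (if b ≤ A then 1 else 0) < p then 1 else 0)
  + (if b ≤ B' + (if A ≤ B' then 1 else 0) then 1 else 0)
  + A + (M - B')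

lemma ellh_master (M : ℕ) (h : Fin (M+4) → Fin (M+4))
    (hval : ∀ j : Fin (M+4), (h j : ℕ) =
      if (j : ℕ) = 0 then 1 else if (j:ℕ)+2 < M+4 then M+2 else M+3)
    (p : Fin (M+4)) (b : Fin (M+3)) (A : Fin (M+2)) (B' : Fin (M+1))
    (ρ : Equiv.Perm (Fin M)) :
    ellh h (consPerm p (snocPerm b (consPerm A (snocPerm B' ρ))))
      = EE M (p:ℕ) (b:ℕ) (A:ℕ) (B':ℕ) + invP ρ := by
  have hw := ellh_consPerm M h hval p (snocPerm b (consPerm A (snocPerm B' ρ)))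
  rw [stat1_snocPerm] at hw
  rw [invP_consPerm, invP_snocPerm] at hw
  have h1 : (snocPerm b (consPerm A (snocPerm B' ρ))) 0 = b.succAbove A := by
    have h0 : (0 : Fin (M+3)) = Fin.castSucc 0 := rfl
    rw [h0, snocPerm_castSucc, consPerm_zero]
  have h2 : (consPerm A (snocPerm B' ρ)) (Fin.last (M+1)) = A.succAbove B' := by
    rw [← Fin.succ_last, consPerm_succ, snocPerm_last]
  rw [h1, h2, succAbove_val b A, succAbove_val A B'] at hw
  rw [hw, EE]
  omega

lemma poin_eq (M : ℕ) (h : Fin (M+4) → Fin (M+4))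
    (hval : ∀ j : Fin (M+4), (h j : ℕ) =
      if (j : ℕ) = 0 then 1 else if (j:ℕ)+2 < M+4 then M+2 else M+3) :
    Poin h = (∑ p ∈ Finset.range (M+4), ∑ b ∈ Finset.range (M+3),
        ∑ A ∈ Finset.range (M+2), ∑ B' ∈ Finset.range (M+1),
        Polynomial.X ^ (EE M p b A B')) * qFact M := by
  have L4 : ∀ (p : Fin (M+4)) (b : Fin (M+3)) (A : Fin (M+2)) (B' : Fin (M+1)),
      (∑ ρ : Equiv.Perm (Fin M),
        (Polynomial.X : Polynomial ℤ) ^ ellh h (consPerm p (snocPerm b (consPerm A (snocPerm B' ρ)))))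
      = Polynomial.X ^ EE M (p:ℕ) (b:ℕ) (A:ℕ) (B':ℕ) * qFact M := by
    intro p b A B'
    have : ∀ ρ : Equiv.Perm (Fin M),
        (Polynomial.X : Polynomial ℤ) ^ ellh h (consPerm p (snocPerm b (consPerm A (snocPerm B' ρ))))
        = Polynomial.X ^ EE M (p:ℕ) (b:ℕ) (A:ℕ) (B':ℕ) * Polynomial.X ^ invP ρ := by
      intro ρ; rw [ellh_master M h hval, pow_add]
    rw [Finset.sum_congr rfl (fun ρ _ => this ρ), ← Finset.mul_sum, sum_invP_X]
  calc Poin h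
      = ∑ p : Fin (M+4), ∑ τ : Equiv.Perm (Fin (M+3)),
          (Polynomial.X : Polynomial ℤ) ^ ellh h (consPerm p τ) := by
        rw [Poin]; exact sum_perm_cons (fun w => Polynomial.X ^ ellh h w)
    _ = ∑ p : Fin (M+4), ∑ b : Fin (M+3), ∑ σ : Equiv.Perm (Fin (M+2)),
          (Polynomial.X : Polynomial ℤ) ^ ellh h (consPerm p (snocPerm b σ)) := by
        exact Finset.sum_congr rfl (fun p _ =>
          sum_perm_snoc (fun τ => Polynomial.X ^ ellh h (consPerm p τ)))
    _ = ∑ p : Fin (M+4), ∑ b : Fin (M+3), ∑ A : Fin (M+2), ∑ σ' : Equiv.Perm (Fin (M+1)),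
          (Polynomial.X : Polynomial ℤ) ^ ellh h (consPerm p (snocPerm b (consPerm A σ'))) := by
        exact Finset.sum_congr rfl (fun p _ => Finset.sum_congr rfl (fun b _ =>
          sum_perm_cons (fun σ => Polynomial.X ^ ellh h (consPerm p (snocPerm b σ)))))
    _ = ∑ p : Fin (M+4), ∑ b : Fin (M+3), ∑ A : Fin (M+2), ∑ B' : Fin (M+1),
          ∑ ρ : Equiv.Perm (Fin M),
          (Polynomial.X : Polynomial ℤ) ^ ellh h (consPerm p (snocPerm b (consPerm A (snocPerm B' ρ)))) := by
        exact Finset.sum_congr rfl (fun p _ => Finset.sum_congr rfl (fun b _ =>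
          Finset.sum_congr rfl (fun A _ =>
          sum_perm_snoc (fun σ' => Polynomial.X ^ ellh h (consPerm p (snocPerm b (consPerm A σ')))))))
    _ = ∑ p : Fin (M+4), ∑ b : Fin (M+3), ∑ A : Fin (M+2), ∑ B' : Fin (M+1),
          Polynomial.X ^ EE M (p:ℕ) (b:ℕ) (A:ℕ) (B':ℕ) * qFact M := by
        exact Finset.sum_congr rfl (fun p _ => Finset.sum_congr rfl (fun b _ =>
          Finset.sum_congr rfl (fun A _ => Finset.sum_congr rfl (fun B' _ => L4 p b A B'))))
    _ = (∑ p : Fin (M+4), ∑ b : Fin (M+3), ∑ A : Fin (M+2), ∑ B' : Fin (M+1),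
          Polynomial.X ^ EE M (p:ℕ) (b:ℕ) (A:ℕ) (B':ℕ)) * qFact M := by
        simp only [← Finset.sum_mul]
    _ = _ := by
        congr 1
        rw [Fin.sum_univ_eq_sum_range (fun p =>
          ∑ b : Fin (M+3), ∑ A : Fin (M+2), ∑ B' : Fin (M+1),
            (Polynomial.X : Polynomial ℤ) ^ EE M p (b:ℕ) (A:ℕ) (B':ℕ))]
        refine Finset.sum_congr rfl (fun p _ => ?_)
        rw [Fin.sum_univ_eq_sum_range (fun b =>
          ∑ A : Fin (M+2), ∑ B' : Fin (M+1),
            (Polynomial.X : Polynomial ℤ) ^ EE M p b (A:ℕ) (B':ℕ))]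
        refine Finset.sum_congr rfl (fun b _ => ?_)
        rw [Fin.sum_univ_eq_sum_range (fun A =>
          ∑ B' : Fin (M+1), (Polynomial.X : Polynomial ℤ) ^ EE M p b A (B':ℕ))]
        refine Finset.sum_congr rfl (fun A _ => ?_)
        rw [Fin.sum_univ_eq_sum_range (fun B' =>
          (Polynomial.X : Polynomial ℤ) ^ EE M p b A B')]

lemma sum_if_eq_shift (R d c : ℕ) (f : ℕ → ℤ) :
    (∑ x ∈ Finset.range R, if c = d + x then f x else 0)
      = if d ≤ c ∧ c - d < R then f (c - d) else 0 := by
  induction R with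
  | zero => rw [if_neg (by omega)]; simp
  | succ R ih =>
    rw [Finset.sum_range_succ, ih]
    by_cases h2 : c = d + R
    · rw [if_pos h2, if_neg (by omega), if_pos (by omega), zero_add]
      exact (congrArg f (by omega)).symm
    · rw [if_neg h2, add_zero]
      by_cases h1 : d ≤ c ∧ c - d < R
      · rw [if_pos h1, if_pos (by omega)]
      · rw [if_neg h1, if_neg (by omega)]

lemma sum_if_eq_shift_Ico (l u d c : ℕ) (hlu : l ≤ u) (f : ℕ → ℤ) :
    (∑ x ∈ Finset.Ico l u, if c = d + x then f x else 0)
      = if d ≤ c ∧ l ≤ c - d ∧ c - d < u then f (c - d) else 0 := by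
  rw [Finset.sum_Ico_eq_sub _ hlu, sum_if_eq_shift, sum_if_eq_shift]
  by_cases h1 : d ≤ c ∧ c - d < l
  · rw [if_pos h1, if_pos (by omega), if_neg (by omega), sub_self]
  · rw [if_neg h1, sub_zero]
    by_cases h2 : d ≤ c ∧ c - d < u
    · rw [if_pos h2, if_pos (by omega)]
    · rw [if_neg h2, if_neg (by omega)]

lemma sum_p_stage (R t c₀ k : ℕ) (ht : t + 1 ≤ R) :
    (∑ p ∈ Finset.range R, if k = (if t < p then 1 else 0) + c₀ then (1:ℤ) else 0)
      = (if k = c₀ then ((t:ℤ)+1) else 0) + (if k = 1 + c₀ then ((R:ℤ)-1-(t:ℤ)) else 0) := by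
  rw [Finset.range_eq_Ico, ← Finset.sum_Ico_consecutive _ (Nat.zero_le (t+1)) ht]
  have e1 : (∑ p ∈ Finset.Ico 0 (t+1), if k = (if t < p then 1 else 0) + c₀ then (1:ℤ) else 0)
      = ∑ _p ∈ Finset.Ico 0 (t+1), (if k = c₀ then (1:ℤ) else 0) := by
    refine Finset.sum_congr rfl (fun p hp => ?_)
    rw [Finset.mem_Ico] at hp
    have hiv : (if t < p then (1:ℕ) else 0) = 0 := if_neg (by omega)
    rw [hiv, zero_add]
  have e2 : (∑ p ∈ Finset.Ico (t+1) R, if k = (if t < p then 1 else 0) + c₀ then (1:ℤ) else 0)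
      = ∑ _p ∈ Finset.Ico (t+1) R, (if k = 1 + c₀ then (1:ℤ) else 0) := by
    refine Finset.sum_congr rfl (fun p hp => ?_)
    rw [Finset.mem_Ico] at hp
    have hiv : (if t < p then (1:ℕ) else 0) = 1 := if_pos (by omega)
    rw [hiv]
  rw [e1, e2, Finset.sum_const, Finset.sum_const, Nat.card_Ico, Nat.card_Ico, nsmul_eq_mul,
    nsmul_eq_mul]
  have c1 : ((t + 1 - 0 : ℕ) : ℤ) = (t:ℤ) + 1 := by omega
  have c2 : ((R - (t+1) : ℕ) : ℤ) = (R:ℤ) - 1 - (t:ℤ) := by omega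
  rw [c1, c2]
  split_ifs <;> ring

lemma sum_range_split3 (g : ℕ → ℤ) (a b c : ℕ) (h1 : a ≤ b) (h2 : b ≤ c) :
    (∑ x ∈ Finset.range c, g x)
      = (∑ x ∈ Finset.Ico 0 a, g x) + (∑ x ∈ Finset.Ico a b, g x)
        + (∑ x ∈ Finset.Ico b c, g x) := by
  rw [Finset.range_eq_Ico, ← Finset.sum_Ico_consecutive g (Nat.zero_le b) h2,
    ← Finset.sum_Ico_consecutive g (Nat.zero_le a) h1]

lemma sum_b_region (M k A B' l u t c₀ : ℕ) (hlu : l ≤ u) (ht : t+1 ≤ M+4)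
    (hEE : ∀ b ∈ Finset.Ico l u, ∀ p, EE M p b A B' = (if t < p then 1 else 0) + c₀) :
    (∑ b ∈ Finset.Ico l u, ∑ p ∈ Finset.range (M+4), if k = EE M p b A B' then (1:ℤ) else 0)
    = ((u:ℤ) - (l:ℤ)) * ((if k = c₀ then ((t:ℤ)+1) else 0)
        + (if k = 1 + c₀ then ((M:ℤ)+3-(t:ℤ)) else 0)) := by
  have h1 : ∀ b ∈ Finset.Ico l u,
      (∑ p ∈ Finset.range (M+4), if k = EE M p b A B' then (1:ℤ) else 0)
      = (if k = c₀ then ((t:ℤ)+1) else 0) + (if k = 1 + c₀ then ((M:ℤ)+3-(t:ℤ)) else 0) := by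
    intro b hb
    rw [Finset.sum_congr rfl (fun p _ => by rw [hEE b hb p]), sum_p_stage (M+4) t c₀ k ht]
    rw [show ((M+4:ℕ):ℤ)-1-(t:ℤ) = (M:ℤ)+3-(t:ℤ) from by push_cast; ring]
  rw [Finset.sum_congr rfl h1, Finset.sum_const, Nat.card_Ico, nsmul_eq_mul]
  rw [show ((u - l:ℕ):ℤ) = (u:ℤ)-(l:ℤ) from by omega]

lemma stageBP_le (M k A B' : ℕ) (hA : A ≤ M+1) (hB : B' ≤ M) (hAB : A ≤ B') :
    (∑ b ∈ Finset.range (M+3), ∑ p ∈ Finset.range (M+4),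
        if k = EE M p b A B' then (1:ℤ) else 0)
    = (if k = A + (M-B') then ((M:ℤ)+1-(B':ℤ))*((A:ℤ)+1) else 0)
    + (if k = A + (M-B') + 1 then
        ((A:ℤ)+1)*((A:ℤ)+2) + ((B':ℤ)+1-(A:ℤ))*((A:ℤ)+1)
          + ((M:ℤ)+1-(B':ℤ))*((M:ℤ)+3-(A:ℤ)) else 0)
    + (if k = A + (M-B') + 2 then
        ((A:ℤ)+1)*((M:ℤ)+2-(A:ℤ)) + ((B':ℤ)+1-(A:ℤ))*((M:ℤ)+3-(A:ℤ)) else 0) := by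
  have hr1 : ∀ b ∈ Finset.Ico 0 (A+1), ∀ p,
      EE M p b A B' = (if A+1 < p then 1 else 0) + (1+A+(M-B')) := by
    intro b hb p
    rw [Finset.mem_Ico] at hb
    simp only [EE]
    rw [if_pos hAB, if_pos (show b ≤ A by omega), if_pos (show b ≤ B'+1 by omega)]
    ring
  have hr2 : ∀ b ∈ Finset.Ico (A+1) (B'+2), ∀ p,
      EE M p b A B' = (if A < p then 1 else 0) + (1+A+(M-B')) := by
    intro b hb p
    rw [Finset.mem_Ico] at hb
    simp only [EE]
    rw [if_pos hAB, if_neg (show ¬ b ≤ A by omega), if_pos (show b ≤ B'+1 by omega)]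
    ring
  have hr3 : ∀ b ∈ Finset.Ico (B'+2) (M+3), ∀ p,
      EE M p b A B' = (if A < p then 1 else 0) + (A+(M-B')) := by
    intro b hb p
    rw [Finset.mem_Ico] at hb
    simp only [EE]
    rw [if_pos hAB, if_neg (show ¬ b ≤ A by omega), if_neg (show ¬ b ≤ B'+1 by omega)]
    ring
  rw [sum_range_split3 _ (A+1) (B'+2) (M+3) (by omega) (by omega),
    sum_b_region M k A B' 0 (A+1) (A+1) (1+A+(M-B')) (by omega) (by omega) hr1,
    sum_b_region M k A B' (A+1) (B'+2) A (1+A+(M-B')) (by omega) (by omega) hr2,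
    sum_b_region M k A B' (B'+2) (M+3) A (A+(M-B')) (by omega) (by omega) hr3]
  rw [show (1+(1+A+(M-B'))) = A+(M-B')+2 from by ring,
    show (1+A+(M-B')) = A+(M-B')+1 from by ring,
    show (1+(A+(M-B'))) = A+(M-B')+1 from by ring]
  push_cast
  split_ifs <;> first | (exfalso; omega) | ring

lemma stageBP_gt (M k A B' : ℕ) (hA : A ≤ M+1) (hB : B' ≤ M) (hAB : B' < A) :
    (∑ b ∈ Finset.range (M+3), ∑ p ∈ Finset.range (M+4),
        if k = EE M p b A B' then (1:ℤ) else 0)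
    = (if k = A + (M-B') then
        ((A:ℤ)-(B':ℤ))*((A:ℤ)+2) + ((M:ℤ)+2-(A:ℤ))*((A:ℤ)+1) else 0)
    + (if k = A + (M-B') + 1 then
        ((B':ℤ)+1)*((A:ℤ)+2) + ((A:ℤ)-(B':ℤ))*((M:ℤ)+2-(A:ℤ))
          + ((M:ℤ)+2-(A:ℤ))*((M:ℤ)+3-(A:ℤ)) else 0)
    + (if k = A + (M-B') + 2 then ((B':ℤ)+1)*((M:ℤ)+2-(A:ℤ)) else 0) := by
  have hr1 : ∀ b ∈ Finset.Ico 0 (B'+1), ∀ p,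
      EE M p b A B' = (if A+1 < p then 1 else 0) + (1+A+(M-B')) := by
    intro b hb p
    rw [Finset.mem_Ico] at hb
    simp only [EE]
    rw [if_neg (show ¬ A ≤ B' by omega), if_pos (show b ≤ A by omega),
      if_pos (show b ≤ B'+0 by omega)]
    ring
  have hr2 : ∀ b ∈ Finset.Ico (B'+1) (A+1), ∀ p,
      EE M p b A B' = (if A+1 < p then 1 else 0) + (A+(M-B')) := by
    intro b hb p
    rw [Finset.mem_Ico] at hb
    simp only [EE]
    rw [if_neg (show ¬ A ≤ B' by omega), if_pos (show b ≤ A by omega),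
      if_neg (show ¬ b ≤ B'+0 by omega)]
    ring
  have hr3 : ∀ b ∈ Finset.Ico (A+1) (M+3), ∀ p,
      EE M p b A B' = (if A < p then 1 else 0) + (A+(M-B')) := by
    intro b hb p
    rw [Finset.mem_Ico] at hb
    simp only [EE]
    rw [if_neg (show ¬ A ≤ B' by omega), if_neg (show ¬ b ≤ A by omega),
      if_neg (show ¬ b ≤ B'+0 by omega)]
    ring
  rw [sum_range_split3 _ (B'+1) (A+1) (M+3) (by omega) (by omega),
    sum_b_region M k A B' 0 (B'+1) (A+1) (1+A+(M-B')) (by omega) (by omega) hr1,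
    sum_b_region M k A B' (B'+1) (A+1) (A+1) (A+(M-B')) (by omega) (by omega) hr2,
    sum_b_region M k A B' (A+1) (M+3) A (A+(M-B')) (by omega) (by omega) hr3]
  rw [show (1+(1+A+(M-B'))) = A+(M-B')+2 from by ring,
    show (1+A+(M-B')) = A+(M-B')+1 from by ring,
    show (1+(A+(M-B'))) = A+(M-B')+1 from by ring]
  push_cast
  split_ifs <;> first | (exfalso; omega) | ring

lemma sum4_comm (R1 R2 R3 R4 : ℕ) (f : ℕ → ℕ → ℕ → ℕ → ℤ) :
    (∑ p ∈ Finset.range R1, ∑ b ∈ Finset.range R2, ∑ A ∈ Finset.range R3,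
      ∑ B ∈ Finset.range R4, f p b A B)
    = ∑ A ∈ Finset.range R3, ∑ B ∈ Finset.range R4, ∑ b ∈ Finset.range R2,
      ∑ p ∈ Finset.range R1, f p b A B := by
  calc (∑ p ∈ Finset.range R1, ∑ b ∈ Finset.range R2, ∑ A ∈ Finset.range R3,
      ∑ B ∈ Finset.range R4, f p b A B)
      = ∑ b ∈ Finset.range R2, ∑ p ∈ Finset.range R1, ∑ A ∈ Finset.range R3,
        ∑ B ∈ Finset.range R4, f p b A B := Finset.sum_comm
    _ = ∑ b ∈ Finset.range R2, ∑ A ∈ Finset.range R3, ∑ p ∈ Finset.range R1,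
        ∑ B ∈ Finset.range R4, f p b A B :=
        Finset.sum_congr rfl (fun b _ => Finset.sum_comm)
    _ = ∑ A ∈ Finset.range R3, ∑ b ∈ Finset.range R2, ∑ p ∈ Finset.range R1,
        ∑ B ∈ Finset.range R4, f p b A B := Finset.sum_comm
    _ = ∑ A ∈ Finset.range R3, ∑ b ∈ Finset.range R2, ∑ B ∈ Finset.range R4,
        ∑ p ∈ Finset.range R1, f p b A B :=
        Finset.sum_congr rfl (fun A _ => Finset.sum_congr rfl (fun b _ => Finset.sum_comm))
    _ = ∑ A ∈ Finset.range R3, ∑ B ∈ Finset.range R4, ∑ b ∈ Finset.range R2,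
        ∑ p ∈ Finset.range R1, f p b A B :=
        Finset.sum_congr rfl (fun A _ => Finset.sum_comm)

lemma sum_range_split2 (g : ℕ → ℤ) (a c : ℕ) (h : a ≤ c) :
    (∑ x ∈ Finset.range c, g x) = (∑ x ∈ Finset.Ico 0 a, g x) + (∑ x ∈ Finset.Ico a c, g x) := by
  rw [Finset.range_eq_Ico, ← Finset.sum_Ico_consecutive g (Nat.zero_le a) h]

lemma sum_range_if_between (R lo hi : ℕ) (f : ℕ → ℤ) :
    (∑ A ∈ Finset.range R, if lo ≤ A ∧ A + 1 ≤ hi then f A else 0)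
      = ∑ A ∈ Finset.Ico lo (min hi R), f A := by
  rw [← Finset.sum_filter]
  apply Finset.sum_congr _ (fun x _ => rfl)
  ext x
  simp only [Finset.mem_filter, Finset.mem_range, Finset.mem_Ico]
  omega

lemma sum_quad (u : ℕ) (a b c : ℤ) :
    6 * (∑ A ∈ Finset.range u, (a + b*(A:ℤ) + c*(A:ℤ)*(A:ℤ)))
    = 6*a*(u:ℤ) + 3*b*(u:ℤ)*((u:ℤ)-1) + c*(u:ℤ)*((u:ℤ)-1)*(2*(u:ℤ)-1) := by
  induction u with
  | zero => simp
  | succ u ih =>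
    rw [Finset.sum_range_succ, mul_add, ih]
    push_cast
    ring

lemma sum_ite_le_int (R j : ℕ) :
    (∑ i ∈ Finset.range R, if i ≤ j then (1:ℤ) else 0) = (min (j+1) R : ℕ) := by
  induction R with
  | zero => simp
  | succ R ih =>
    rw [Finset.sum_range_succ, ih]
    have h1 : ((min (j+1) (R+1) : ℕ) : ℤ) = (min (j+1) R : ℕ) + (if R ≤ j then (1:ℤ) else 0) := by
      split_ifs <;> omega
    rw [h1]

noncomputable def Ncoef (M k : ℕ) : ℤ :=
  ((min (k+1) (M+1) : ℕ) : ℤ) + 2*((M:ℤ)+4)*(k:ℤ)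
  + (if 2 ≤ k then ((M:ℤ)+4)*((M:ℤ)+3)*((k:ℤ)-1) else 0)
  + (if k = M+1 then (((M+4)*(M+1)/2 : ℕ) : ℤ) else 0)

lemma ite_val_congr {c : Prop} [Decidable c] {x y : ℤ} (h : c → x = y) :
    (if c then x else 0) = (if c then y else 0) := by
  split_ifs with hc
  · exact h hc
  · rfl

lemma Bstage (M k A : ℕ) (hA : A ≤ M+1) (hk : k ≤ M+1) :
    (∑ B' ∈ Finset.range (M+1), ∑ b ∈ Finset.range (M+3), ∑ p ∈ Finset.range (M+4),
        if k = EE M p b A B' then (1:ℤ) else 0)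
    = (if k = M+1 ∧ 1 ≤ A then ((A:ℤ)+2+((M:ℤ)+2-(A:ℤ))*((A:ℤ)+1)) else 0)
    + (if k ≤ M ∧ A ≤ k then ((k:ℤ)+1-(A:ℤ))*((A:ℤ)+1) else 0)
    + (if A+1 ≤ k then
        ((A:ℤ)+1)*((A:ℤ)+2) + ((M:ℤ)+2-(k:ℤ))*((A:ℤ)+1) + ((k:ℤ)-(A:ℤ))*((M:ℤ)+3-(A:ℤ)) else 0)
    + (if A+2 ≤ k then
        ((A:ℤ)+1)*((M:ℤ)+2-(A:ℤ)) + ((M:ℤ)+3-(k:ℤ))*((M:ℤ)+3-(A:ℤ)) else 0) := by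
  rw [sum_range_split2 _ A (M+1) (by omega)]
  have hgt : (∑ B' ∈ Finset.Ico 0 A, ∑ b ∈ Finset.range (M+3), ∑ p ∈ Finset.range (M+4),
        if k = EE M p b A B' then (1:ℤ) else 0)
      = (if k = M+1 ∧ 1 ≤ A then ((A:ℤ)+2+((M:ℤ)+2-(A:ℤ))*((A:ℤ)+1)) else 0) := by
    have h1 : ∀ B' ∈ Finset.Ico 0 A,
        (∑ b ∈ Finset.range (M+3), ∑ p ∈ Finset.range (M+4),
          if k = EE M p b A B' then (1:ℤ) else 0)
        = (if A+M = k+B' then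
            ((A:ℤ)-(B':ℤ))*((A:ℤ)+2) + ((M:ℤ)+2-(A:ℤ))*((A:ℤ)+1) else 0)
        + (if A+M+1 = k+B' then
            ((B':ℤ)+1)*((A:ℤ)+2) + ((A:ℤ)-(B':ℤ))*((M:ℤ)+2-(A:ℤ))
              + ((M:ℤ)+2-(A:ℤ))*((M:ℤ)+3-(A:ℤ)) else 0)
        + (if A+M+2 = k+B' then ((B':ℤ)+1)*((M:ℤ)+2-(A:ℤ)) else 0) := by
      intro B' hB'
      rw [Finset.mem_Ico] at hB'
      rw [stageBP_gt M k A B' hA (by omega) (by omega)]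
      rw [if_congr (show (k = A + (M-B')) ↔ (A+M = k+B') by omega) rfl rfl,
        if_congr (show (k = A + (M-B') + 1) ↔ (A+M+1 = k+B') by omega) rfl rfl,
        if_congr (show (k = A + (M-B') + 2) ↔ (A+M+2 = k+B') by omega) rfl rfl]
    rw [Finset.sum_congr rfl h1, Finset.sum_add_distrib, Finset.sum_add_distrib]
    rw [sum_if_eq_shift_Ico 0 A k (A+M) (by omega),
      sum_if_eq_shift_Ico 0 A k (A+M+1) (by omega),
      sum_if_eq_shift_Ico 0 A k (A+M+2) (by omega)]
    rw [if_neg (show ¬ (k ≤ A+M+1 ∧ 0 ≤ A+M+1-k ∧ A+M+1-k < A) by omega),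
      if_neg (show ¬ (k ≤ A+M+2 ∧ 0 ≤ A+M+2-k ∧ A+M+2-k < A) by omega)]
    rw [if_congr (show (k ≤ A+M ∧ 0 ≤ A+M-k ∧ A+M-k < A) ↔ (k = M+1 ∧ 1 ≤ A) by omega) rfl rfl]
    rw [ite_val_congr (show (k = M+1 ∧ 1 ≤ A) →
        ((A:ℤ)-((A+M-k:ℕ):ℤ))*((A:ℤ)+2) + ((M:ℤ)+2-(A:ℤ))*((A:ℤ)+1)
        = ((A:ℤ)+2+((M:ℤ)+2-(A:ℤ))*((A:ℤ)+1)) by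
      rintro ⟨h1', h2'⟩
      rw [show ((A+M-k:ℕ):ℤ) = (A:ℤ)-1 by omega]
      ring)]
    ring
  have hle : (∑ B' ∈ Finset.Ico A (M+1), ∑ b ∈ Finset.range (M+3), ∑ p ∈ Finset.range (M+4),
        if k = EE M p b A B' then (1:ℤ) else 0)
      = (if k ≤ M ∧ A ≤ k then ((k:ℤ)+1-(A:ℤ))*((A:ℤ)+1) else 0)
      + (if A+1 ≤ k then
          ((A:ℤ)+1)*((A:ℤ)+2) + ((M:ℤ)+2-(k:ℤ))*((A:ℤ)+1) + ((k:ℤ)-(A:ℤ))*((M:ℤ)+3-(A:ℤ)) else 0)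
      + (if A+2 ≤ k then
          ((A:ℤ)+1)*((M:ℤ)+2-(A:ℤ)) + ((M:ℤ)+3-(k:ℤ))*((M:ℤ)+3-(A:ℤ)) else 0) := by
    have h1 : ∀ B' ∈ Finset.Ico A (M+1),
        (∑ b ∈ Finset.range (M+3), ∑ p ∈ Finset.range (M+4),
          if k = EE M p b A B' then (1:ℤ) else 0)
        = (if A+M = k+B' then ((M:ℤ)+1-(B':ℤ))*((A:ℤ)+1) else 0)
        + (if A+M+1 = k+B' then
            ((A:ℤ)+1)*((A:ℤ)+2) + ((B':ℤ)+1-(A:ℤ))*((A:ℤ)+1)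
              + ((M:ℤ)+1-(B':ℤ))*((M:ℤ)+3-(A:ℤ)) else 0)
        + (if A+M+2 = k+B' then
            ((A:ℤ)+1)*((M:ℤ)+2-(A:ℤ)) + ((B':ℤ)+1-(A:ℤ))*((M:ℤ)+3-(A:ℤ)) else 0) := by
      intro B' hB'
      rw [Finset.mem_Ico] at hB'
      rw [stageBP_le M k A B' hA (by omega) (by omega)]
      rw [if_congr (show (k = A + (M-B')) ↔ (A+M = k+B') by omega) rfl rfl,
        if_congr (show (k = A + (M-B') + 1) ↔ (A+M+1 = k+B') by omega) rfl rfl,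
        if_congr (show (k = A + (M-B') + 2) ↔ (A+M+2 = k+B') by omega) rfl rfl]
    rw [Finset.sum_congr rfl h1, Finset.sum_add_distrib, Finset.sum_add_distrib]
    rw [sum_if_eq_shift_Ico A (M+1) k (A+M) (by omega),
      sum_if_eq_shift_Ico A (M+1) k (A+M+1) (by omega),
      sum_if_eq_shift_Ico A (M+1) k (A+M+2) (by omega)]
    rw [if_congr (show (k ≤ A+M ∧ A ≤ A+M-k ∧ A+M-k < M+1) ↔ (k ≤ M ∧ A ≤ k) by omega) rfl rfl,
      if_congr (show (k ≤ A+M+1 ∧ A ≤ A+M+1-k ∧ A+M+1-k < M+1) ↔ (A+1 ≤ k)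
        by omega) rfl rfl,
      if_congr (show (k ≤ A+M+2 ∧ A ≤ A+M+2-k ∧ A+M+2-k < M+1) ↔ (A+2 ≤ k)
        by omega) rfl rfl]
    rw [ite_val_congr (show (k ≤ M ∧ A ≤ k) →
        ((M:ℤ)+1-((A+M-k:ℕ):ℤ))*((A:ℤ)+1) = ((k:ℤ)+1-(A:ℤ))*((A:ℤ)+1) by
      rintro ⟨h1', h2'⟩
      rw [show ((A+M-k:ℕ):ℤ) = (A:ℤ)+(M:ℤ)-(k:ℤ) by omega]
      ring)]
    rw [ite_val_congr (show (A+1 ≤ k) →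
        ((A:ℤ)+1)*((A:ℤ)+2) + (((A+M+1-k:ℕ):ℤ)+1-(A:ℤ))*((A:ℤ)+1)
          + ((M:ℤ)+1-((A+M+1-k:ℕ):ℤ))*((M:ℤ)+3-(A:ℤ))
        = ((A:ℤ)+1)*((A:ℤ)+2) + ((M:ℤ)+2-(k:ℤ))*((A:ℤ)+1)
          + ((k:ℤ)-(A:ℤ))*((M:ℤ)+3-(A:ℤ)) by
      intro h1'
      rw [show ((A+M+1-k:ℕ):ℤ) = (A:ℤ)+(M:ℤ)+1-(k:ℤ) by omega]
      ring)]
    rw [ite_val_congr (show (A+2 ≤ k) →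
        ((A:ℤ)+1)*((M:ℤ)+2-(A:ℤ)) + (((A+M+2-k:ℕ):ℤ)+1-(A:ℤ))*((M:ℤ)+3-(A:ℤ))
        = ((A:ℤ)+1)*((M:ℤ)+2-(A:ℤ)) + ((M:ℤ)+3-(k:ℤ))*((M:ℤ)+3-(A:ℤ)) by
      intro h1'
      rw [show ((A+M+2-k:ℕ):ℤ) = (A:ℤ)+(M:ℤ)+2-(k:ℤ) by omega]
      ring)]
  rw [hgt, hle]
  ring

lemma S4_coeff (M k : ℕ) (hk : k ≤ M+1) :
    (∑ p ∈ Finset.range (M+4), ∑ b ∈ Finset.range (M+3), ∑ A ∈ Finset.range (M+2),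
      ∑ B' ∈ Finset.range (M+1), if k = EE M p b A B' then (1:ℤ) else 0) = Ncoef M k := by
  rw [sum4_comm]
  have hB : ∀ A ∈ Finset.range (M+2),
      (∑ B' ∈ Finset.range (M+1), ∑ b ∈ Finset.range (M+3), ∑ p ∈ Finset.range (M+4),
        if k = EE M p b A B' then (1:ℤ) else 0)
      = (if k = M+1 ∧ 1 ≤ A then ((A:ℤ)+2+((M:ℤ)+2-(A:ℤ))*((A:ℤ)+1)) else 0)
      + (if k ≤ M ∧ A ≤ k then ((k:ℤ)+1-(A:ℤ))*((A:ℤ)+1) else 0)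
      + (if A+1 ≤ k then
          ((A:ℤ)+1)*((A:ℤ)+2) + ((M:ℤ)+2-(k:ℤ))*((A:ℤ)+1) + ((k:ℤ)-(A:ℤ))*((M:ℤ)+3-(A:ℤ)) else 0)
      + (if A+2 ≤ k then
          ((A:ℤ)+1)*((M:ℤ)+2-(A:ℤ)) + ((M:ℤ)+3-(k:ℤ))*((M:ℤ)+3-(A:ℤ)) else 0) := by
    intro A hA
    rw [Finset.mem_range] at hA
    exact Bstage M k A (by omega) hk
  rw [Finset.sum_congr rfl hB, Finset.sum_add_distrib, Finset.sum_add_distrib,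
    Finset.sum_add_distrib]
  -- normalize S1
  have hS1 : (∑ A ∈ Finset.range (M+2), if A+1 ≤ k then
      ((A:ℤ)+1)*((A:ℤ)+2) + ((M:ℤ)+2-(k:ℤ))*((A:ℤ)+1) + ((k:ℤ)-(A:ℤ))*((M:ℤ)+3-(A:ℤ)) else 0)
      = ∑ A ∈ Finset.range k,
        (((M:ℤ)+4+2*(k:ℤ)+(k:ℤ)*(M:ℤ)) + (2-2*(k:ℤ))*(A:ℤ) + 2*(A:ℤ)*(A:ℤ)) := by
    rw [Finset.sum_congr rfl (fun A _ => if_congr (show (A+1 ≤ k) ↔ (0 ≤ A ∧ A+1 ≤ k)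
      by omega) rfl rfl), sum_range_if_between (M+2) 0 k _,
      show min k (M+2) = k by omega, ← Finset.range_eq_Ico]
    refine Finset.sum_congr rfl (fun A _ => by ring)
  have hS2 : (∑ A ∈ Finset.range (M+2), if A+2 ≤ k then
      ((A:ℤ)+1)*((M:ℤ)+2-(A:ℤ)) + ((M:ℤ)+3-(k:ℤ))*((M:ℤ)+3-(A:ℤ)) else 0)
      = ∑ A ∈ Finset.range (k-1),
        (((M:ℤ)+2+((M:ℤ)+3-(k:ℤ))*((M:ℤ)+3)) + ((k:ℤ)-2)*(A:ℤ) + (-1)*(A:ℤ)*(A:ℤ)) := by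
    rw [Finset.sum_congr rfl (fun A _ => if_congr (show (A+2 ≤ k) ↔ (0 ≤ A ∧ A+1 ≤ k-1)
      by omega) rfl rfl), sum_range_if_between (M+2) 0 (k-1) _,
      show min (k-1) (M+2) = k-1 by omega, ← Finset.range_eq_Ico]
    refine Finset.sum_congr rfl (fun A _ => by ring)
  rw [hS1, hS2]
  by_cases hkM : k ≤ M
  · -- k ≤ M branch
    have hgt0 : (∑ A ∈ Finset.range (M+2), if k = M+1 ∧ 1 ≤ A then
        ((A:ℤ)+2+((M:ℤ)+2-(A:ℤ))*((A:ℤ)+1)) else 0) = 0 :=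
      Finset.sum_eq_zero (fun A _ => if_neg (by omega))
    have hS0 : (∑ A ∈ Finset.range (M+2), if k ≤ M ∧ A ≤ k then
        ((k:ℤ)+1-(A:ℤ))*((A:ℤ)+1) else 0)
        = ∑ A ∈ Finset.range (k+1),
          (((k:ℤ)+1) + (k:ℤ)*(A:ℤ) + (-1)*(A:ℤ)*(A:ℤ)) := by
      rw [Finset.sum_congr rfl (fun A _ => if_congr (show (k ≤ M ∧ A ≤ k) ↔ (0 ≤ A ∧ A+1 ≤ k+1)
        by omega) rfl rfl), sum_range_if_between (M+2) 0 (k+1) _,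
        show min (k+1) (M+2) = k+1 by omega, ← Finset.range_eq_Ico]
      refine Finset.sum_congr rfl (fun A _ => by ring)
    rw [hgt0, hS0, zero_add]
    refine mul_left_cancel₀ (show (6:ℤ) ≠ 0 by norm_num) ?_
    rw [mul_add, mul_add, sum_quad, sum_quad, sum_quad, Ncoef]
    rw [if_neg (show ¬ k = M+1 by omega), add_zero,
      show ((min (k+1) (M+1) : ℕ) : ℤ) = (k:ℤ)+1 by omega]
    by_cases hk0 : k = 0
    · subst hk0
      norm_num
    · rw [show ((k-1:ℕ):ℤ) = (k:ℤ)-1 by omega]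
      have hite : (if 2 ≤ k then ((M:ℤ)+4)*((M:ℤ)+3)*((k:ℤ)-1) else 0)
          = ((M:ℤ)+4)*((M:ℤ)+3)*((k:ℤ)-1) := by
        split_ifs with h2
        · rfl
        · rw [show (k:ℤ) = 1 by omega]
          ring
      rw [hite]
      push_cast
      ring
  · -- k = M+1 branch
    have hkM1 : k = M+1 := by omega
    subst hkM1
    have hS00 : (∑ A ∈ Finset.range (M+2), if M+1 ≤ M ∧ A ≤ M+1 then
        (((M+1:ℕ):ℤ)+1-(A:ℤ))*((A:ℤ)+1) else 0) = 0 :=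
      Finset.sum_eq_zero (fun A _ => if_neg (by omega))
    have hgt : (∑ A ∈ Finset.range (M+2), if M+1 = M+1 ∧ 1 ≤ A then
        ((A:ℤ)+2+((M:ℤ)+2-(A:ℤ))*((A:ℤ)+1)) else 0)
        = (∑ A ∈ Finset.range (M+2),
            (((M:ℤ)+4) + ((M:ℤ)+2)*(A:ℤ) + (-1)*(A:ℤ)*(A:ℤ)))
          - (((M:ℤ)+4) + ((M:ℤ)+2)*((0:ℕ):ℤ) + (-1)*((0:ℕ):ℤ)*((0:ℕ):ℤ)) := by
      rw [Finset.sum_congr rfl (fun A hA => if_congr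
        (show (M+1 = M+1 ∧ 1 ≤ A) ↔ (1 ≤ A ∧ A+1 ≤ M+2) from by
          rw [Finset.mem_range] at hA; omega) rfl rfl),
        sum_range_if_between (M+2) 1 (M+2) _, Nat.min_self,
        Finset.sum_Ico_eq_sub _ (show 1 ≤ M+2 by omega), Finset.sum_range_one]
      refine congrArg₂ (· - ·) (Finset.sum_congr rfl (fun A _ => by ring)) (by push_cast; ring)
    rw [hS00, hgt, add_zero]
    obtain ⟨c, hc⟩ : ∃ c, (M+4)*(M+1) = 2*c := by
      rcases Nat.even_or_odd M with ⟨t, ht⟩ | ⟨t, ht⟩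
      · exact ⟨(t+2)*(M+1), by subst ht; ring⟩
      · exact ⟨(M+4)*(t+1), by subst ht; ring⟩
    have hcdiv : ((M+4)*(M+1)/2 : ℕ) = c := by
      rw [hc, Nat.mul_div_cancel_left c (by norm_num)]
    refine mul_left_cancel₀ (show (6:ℤ) ≠ 0 by norm_num) ?_
    rw [mul_add, mul_add, mul_sub, sum_quad, sum_quad, sum_quad, Ncoef, hcdiv]
    rw [if_pos rfl, show ((min (M+1+1) (M+1) : ℕ) : ℤ) = (M:ℤ)+1 by omega,
      show ((M+1-1:ℕ):ℤ) = (M:ℤ) by omega]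
    have hite : (if 2 ≤ M+1 then ((M:ℤ)+4)*((M:ℤ)+3)*(((M+1:ℕ):ℤ)-1) else 0)
        = ((M:ℤ)+4)*((M:ℤ)+3)*(M:ℤ) := by
      split_ifs with h2
      · push_cast; ring
      · rw [show (M:ℤ) = 0 by omega]
        ring
    rw [hite]
    have hc' : ((M:ℤ)+4)*((M:ℤ)+1) = 2*(c:ℤ) := by exact_mod_cast congrArg (Nat.cast : ℕ → ℤ) hc
    push_cast
    linear_combination 3 * hc'

lemma S4poly_coeff (M k : ℕ) :
    (∑ p ∈ Finset.range (M+4), ∑ b ∈ Finset.range (M+3), ∑ A ∈ Finset.range (M+2),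
      ∑ B' ∈ Finset.range (M+1), (Polynomial.X : Polynomial ℤ) ^ (EE M p b A B')).coeff k
    = ∑ p ∈ Finset.range (M+4), ∑ b ∈ Finset.range (M+3), ∑ A ∈ Finset.range (M+2),
      ∑ B' ∈ Finset.range (M+1), if k = EE M p b A B' then (1:ℤ) else 0 := by
  simp only [Polynomial.finset_sum_coeff, Polynomial.coeff_X_pow]

lemma qq_coeff (M j : ℕ) (hj : j ≤ M+1) :
    (qInt (M+1) * qInt (M+2)).coeff j = ((min (j+1) (M+1) : ℕ) : ℤ) := by
  have hexp : qInt (M+1) * qInt (M+2)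
      = ∑ i ∈ Finset.range (M+1), ∑ l ∈ Finset.range (M+2),
          (Polynomial.X : Polynomial ℤ) ^ (i + l) := by
    rw [qInt, qInt, Finset.sum_mul]
    refine Finset.sum_congr rfl (fun i _ => ?_)
    rw [Finset.mul_sum]
    exact Finset.sum_congr rfl (fun l _ => (pow_add _ _ _).symm)
  rw [hexp]
  simp only [Polynomial.finset_sum_coeff, Polynomial.coeff_X_pow]
  have h1 : ∀ i ∈ Finset.range (M+1),
      (∑ l ∈ Finset.range (M+2), if j = i + l then (1:ℤ) else 0)
      = (if i ≤ j then (1:ℤ) else 0) := by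
    intro i hi
    rw [Finset.mem_range] at hi
    rw [sum_if_eq_shift (M+2) i j (fun _ => (1:ℤ))]
    exact if_congr (by omega) rfl rfl
  rw [Finset.sum_congr rfl h1, sum_ite_le_int]

lemma qFact_coeff_zero (m : ℕ) : (qFact m).coeff 0 = 1 := by
  induction m with
  | zero => simp [qFact]
  | succ m ih =>
    show (qFact m * qInt (m+1)).coeff 0 = 1
    rw [Polynomial.mul_coeff_zero, ih, one_mul, qInt]
    simp only [Polynomial.finset_sum_coeff, Polynomial.coeff_X_pow]
    rw [Finset.sum_ite_eq (Finset.range (m+1)) 0 (fun _ => (1:ℤ))]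
    simp

lemma W_coeff (M k : ℕ) (hk : k ≤ M+1) :
    ((1 + ((2 * (M+4) : ℕ) : Polynomial ℤ) * Polynomial.X
        + (((M+4) * (M+3) : ℕ) : Polynomial ℤ) * Polynomial.X ^ 2)
      * (qInt (M+1) * qInt (M+2))
      + (((M+4) * (M+1) / 2 : ℕ) : Polynomial ℤ) * Polynomial.X ^ (M+1)).coeff k
    = Ncoef M k := by
  set G := qInt (M+1) * qInt (M+2) with hG
  have hsplit : (1 + ((2 * (M+4) : ℕ) : Polynomial ℤ) * Polynomial.X
        + (((M+4) * (M+3) : ℕ) : Polynomial ℤ) * Polynomial.X ^ 2) * G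
      + (((M+4) * (M+1) / 2 : ℕ) : Polynomial ℤ) * Polynomial.X ^ (M+1)
      = G + (Polynomial.C ((2 * (M+4) : ℕ) : ℤ) * G) * Polynomial.X ^ 1
        + (Polynomial.C (((M+4) * (M+3) : ℕ) : ℤ) * G) * Polynomial.X ^ 2
        + Polynomial.C (((M+4) * (M+1) / 2 : ℕ) : ℤ) * Polynomial.X ^ (M+1) := by
    rw [Polynomial.C_eq_natCast, Polynomial.C_eq_natCast, Polynomial.C_eq_natCast]
    push_cast
    ring
  rw [hsplit]
  rw [Polynomial.coeff_add, Polynomial.coeff_add, Polynomial.coeff_add,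
    Polynomial.coeff_mul_X_pow', Polynomial.coeff_mul_X_pow']
  simp only [Polynomial.coeff_C_mul]
  rw [Polynomial.coeff_X_pow]
  rw [qq_coeff M k hk, qq_coeff M (k-1) (by omega), qq_coeff M (k-2) (by omega), Ncoef]
  by_cases h1 : 1 ≤ k
  · rw [if_pos h1]
    have d1 : ((min (k-1+1) (M+1) : ℕ) : ℤ) = (k:ℤ) := by omega
    rw [d1]
    by_cases h2 : 2 ≤ k
    · rw [if_pos h2, if_pos h2]
      have d2 : ((min (k-2+1) (M+1) : ℕ) : ℤ) = (k:ℤ)-1 := by omega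
      rw [d2]
      by_cases h3 : k = M+1
      · rw [if_pos h3, if_pos h3]
        push_cast
        ring
      · rw [if_neg h3, if_neg h3]
        push_cast
        ring
    · rw [if_neg h2, if_neg h2]
      have hk1 : k = 1 := by omega
      subst hk1
      by_cases h3 : (1:ℕ) = M+1
      · have hM : M = 0 := by omega
        subst hM
        norm_num
      · rw [if_neg h3, if_neg h3]
        push_cast
        ring
  · have hk0 : k = 0 := by omega
    subst hk0
    split_ifs <;> first | (exfalso; omega) | (push_cast; ring)

lemma coeff_mul_congr (P Q R : Polynomial ℤ) (k : ℕ)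
    (h : ∀ j ≤ k, P.coeff j = Q.coeff j) :
    (P * R).coeff k = (Q * R).coeff k := by
  rw [Polynomial.coeff_mul, Polynomial.coeff_mul]
  refine Finset.sum_congr rfl (fun x hx => ?_)
  rw [Finset.HasAntidiagonal.mem_antidiagonal] at hx
  rw [h x.1 (by omega)]

/-- for `n ≥ 4`, with `h = h_n = (2, n−1, …, n−1, n, n)` on `[n]`
(described 0-based by the `if` expression below), writing `P_n = P_{h_n}` and
`Q_n(q) = (1 + 2nq + n(n−1)q²)[n−2]_q! + (n(n−3)/2) q^{n−3}`, one has
`P_n ≡ Q_n (mod q^{n−2})`: the coefficients agree in degrees `0, 1, …, n−3`. -/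
theorem poincare_hn_mod (n : ℕ) (hn : 4 ≤ n) (h : Fin n → Fin n)
    (hval : ∀ j : Fin n, (h j : ℕ) =
      if (j : ℕ) = 0 then 1 else if (j : ℕ) + 2 < n then n - 2 else n - 1) :
    ∀ k : ℕ, k < n - 2 →
      (Poin h).coeff k =
      ((1 + ((2 * n : ℕ) : Polynomial ℤ) * Polynomial.X
          + ((n * (n - 1) : ℕ) : Polynomial ℤ) * Polynomial.X ^ 2) * qFact (n - 2)
        + ((n * (n - 3) / 2 : ℕ) : Polynomial ℤ) * Polynomial.X ^ (n - 3)).coeff k := by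
  obtain ⟨M, rfl⟩ : ∃ M, n = M+4 := ⟨n-4, by omega⟩
  intro k hklt
  have hk : k ≤ M+1 := by omega
  have e2 : M+4-2 = M+2 := by omega
  have e1' : M+4-1 = M+3 := by omega
  have e3 : M+4-3 = M+1 := by omega
  rw [e2, e1', e3]
  have hval' : ∀ j : Fin (M+4), (h j : ℕ) =
      if (j:ℕ) = 0 then 1 else if (j:ℕ)+2 < M+4 then M+2 else M+3 := by
    intro j
    rw [hval j, e2, e1']
  rw [poin_eq M h hval']
  rw [coeff_mul_congr _
    ((1 + ((2 * (M+4) : ℕ) : Polynomial ℤ) * Polynomial.X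
        + (((M+4) * (M+3) : ℕ) : Polynomial ℤ) * Polynomial.X ^ 2)
      * (qInt (M+1) * qInt (M+2))
      + (((M+4) * (M+1) / 2 : ℕ) : Polynomial ℤ) * Polynomial.X ^ (M+1))
    (qFact M) k
    (fun j hj => by
      rw [S4poly_coeff, S4_coeff M j (by omega), W_coeff M j (by omega)])]
  have hfact : qFact (M+2) = qFact M * qInt (M+1) * qInt (M+2) := rfl
  have hWq : ((1 + ((2 * (M+4) : ℕ) : Polynomial ℤ) * Polynomial.X
        + (((M+4) * (M+3) : ℕ) : Polynomial ℤ) * Polynomial.X ^ 2)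
      * (qInt (M+1) * qInt (M+2))
      + (((M+4) * (M+1) / 2 : ℕ) : Polynomial ℤ) * Polynomial.X ^ (M+1)) * qFact M
      = ((1 + ((2 * (M+4) : ℕ) : Polynomial ℤ) * Polynomial.X
          + (((M+4) * (M+3) : ℕ) : Polynomial ℤ) * Polynomial.X ^ 2) * qFact (M+2)
        + (((M+4) * (M+1) / 2 : ℕ) : Polynomial ℤ) * Polynomial.X ^ (M+1))
      + (((M+4) * (M+1) / 2 : ℕ) : Polynomial ℤ)
          * ((qFact M - 1) * Polynomial.X ^ (M+1)) := by
    rw [hfact]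
    ring
  rw [hWq, Polynomial.coeff_add]
  have hz : ((((M+4) * (M+1) / 2 : ℕ) : Polynomial ℤ)
      * ((qFact M - 1) * Polynomial.X ^ (M+1))).coeff k = 0 := by
    rw [← Polynomial.C_eq_natCast, Polynomial.coeff_C_mul, Polynomial.coeff_mul_X_pow']
    by_cases hcase : M+1 ≤ k
    · rw [if_pos hcase, show k - (M+1) = 0 by omega, Polynomial.coeff_sub,
        qFact_coeff_zero, Polynomial.coeff_one_zero, sub_self, mul_zero]
    · rw [if_neg hcase, mul_zero]
  rw [hz, add_zero]
end

section
/- Let h be a Hessenberg function on [n] and let j satisfy 2 ≤ j ≤ n−1, h(j−1) = h(j) = j+1 (i.e., j ∈ ⊥(h)). Then for every k ∈ [n], the function y_{j,k} : S_n → ℤ[t_1,…,t_n], defined by y_{j,k}(w) = t_k − t_{w(j+1)} if k ∈ {w(1),…,w(j)} and y_{j,k}(w) = 0 otherwise, belongs to the GKM ring H(h). -/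
open MvPolynomial

/-- The GKM condition: `f` belongs to the GKM ring `H(h)` of the Hessenberg function `h`
(0-based indexing: position `j : Fin n` corresponds to `j+1 ∈ [n]`). -/
def InGKM {n : ℕ} (h : Fin n → Fin n)
    (f : Equiv.Perm (Fin n) → MvPolynomial (Fin n) ℤ) : Prop :=
  ∀ (w : Equiv.Perm (Fin n)) (i j : Fin n), j < i → i ≤ h j →
    f w - f (w * Equiv.swap i j) ∈ Ideal.span {X (w i) - X (w j)}

/-- if `j ∈ ⊥(h)`, i.e. `2 ≤ j ≤ n-1` (1-based) and `h(j-1) = h(j) = j+1`,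
then for every `k ∈ [n]` the function `y_{j,k}`, with `y_{j,k}(w) = t_k − t_{w(j+1)}` if
`k ∈ {w(1),…,w(j)}` and `0` otherwise, belongs to `H(h)`.
Here `j : Fin n` is the 0-based version of the 1-based index `j+1`, so `1 ≤ j` and
`j + 1 < n` encode `2 ≤ j+1 ≤ n-1` (1-based). -/
theorem y_mem_GKM (n : ℕ) (h : Fin n → Fin n)
    (hmono : Monotone h) (hhess : ∀ j, j ≤ h j)
    (j : Fin n) (hj1 : 1 ≤ (j : ℕ)) (hj2 : (j : ℕ) + 1 < n)
    (hbot1 : (h ⟨(j : ℕ) - 1, by omega⟩ : ℕ) = (j : ℕ) + 1)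
    (hbot2 : (h j : ℕ) = (j : ℕ) + 1)
    (k : Fin n) :
    InGKM h (fun w =>
      if ∃ l : Fin n, (l : ℕ) ≤ (j : ℕ) ∧ w l = k then
        X k - X (w ⟨(j : ℕ) + 1, by omega⟩)
      else 0) := by
  intro w i l hlt hle
  rw [Ideal.mem_span_singleton]
  dsimp only
  set j1 : Fin n := ⟨(j : ℕ) + 1, by omega⟩ with hj1def
  have hj1v : (j1 : ℕ) = (j : ℕ) + 1 := by rw [hj1def]
  clear_value j1
  have hli : (l : ℕ) < (i : ℕ) := hlt
  have hilin : ∀ m : Fin n, (w * Equiv.swap i l) m = w (Equiv.swap i l m) := fun m => rfl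
  by_cases hi : (i : ℕ) ≤ (j : ℕ)
  · -- both positions ≤ j : nothing changes
    have hswap_le : ∀ m : Fin n, (m : ℕ) ≤ (j : ℕ) → ((Equiv.swap i l m : Fin n) : ℕ) ≤ (j : ℕ) := by
      intro m hm
      rcases eq_or_ne m i with rfl | hmi
      · rw [Equiv.swap_apply_left]; omega
      rcases eq_or_ne m l with rfl | hml
      · rw [Equiv.swap_apply_right]; omega
      · rw [Equiv.swap_apply_of_ne_of_ne hmi hml]; exact hm
    have hcond : (∃ m : Fin n, (m : ℕ) ≤ (j : ℕ) ∧ w m = k) ↔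
        (∃ m : Fin n, (m : ℕ) ≤ (j : ℕ) ∧ (w * Equiv.swap i l) m = k) := by
      constructor
      · rintro ⟨m, hm, rfl⟩
        exact ⟨Equiv.swap i l m, hswap_le m hm, by rw [hilin, Equiv.swap_apply_self]⟩
      · rintro ⟨m, hm, hk⟩
        exact ⟨Equiv.swap i l m, hswap_le m hm, by rw [hilin] at hk; exact hk⟩
    have hfix : (w * Equiv.swap i l) j1 = w j1 := by
      rw [hilin, Equiv.swap_apply_of_ne_of_ne]
      · intro e; have : (j1 : ℕ) = (i : ℕ) := congrArg Fin.val e; omega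
      · intro e; have : (j1 : ℕ) = (l : ℕ) := congrArg Fin.val e; omega
    by_cases P : ∃ m : Fin n, (m : ℕ) ≤ (j : ℕ) ∧ w m = k
    · rw [if_pos P, if_pos (hcond.mp P), hfix]
      exact ⟨0, by ring⟩
    · rw [if_neg P, if_neg (fun P' => P (hcond.mpr P'))]
      exact ⟨0, by ring⟩
  · push_neg at hi
    by_cases hl : (l : ℕ) ≤ (j : ℕ)
    · -- main case: l ≤ j < i, forces i = j1
      have hhl : (i : ℕ) ≤ (h l : ℕ) := hle
      have hlj : l ≤ j := hl
      have hhm : (h l : ℕ) ≤ (h j : ℕ) := hmono hlj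
      have hij1 : i = j1 := by apply Fin.ext; omega
      subst hij1
      have hswapj1 : (w * Equiv.swap i l) i = w l := by
        rw [hilin, Equiv.swap_apply_left]
      have hswapl : (w * Equiv.swap i l) l = w i := by
        rw [hilin, Equiv.swap_apply_right]
      have hswapfix : ∀ m : Fin n, (m : ℕ) ≤ (j : ℕ) → m ≠ l → Equiv.swap i l m = m := by
        intro m hm hml
        apply Equiv.swap_apply_of_ne_of_ne _ hml
        intro e; have : (m : ℕ) = (i : ℕ) := congrArg Fin.val e; omega
      by_cases hkl : k = w l
      · have P : ∃ m : Fin n, (m : ℕ) ≤ (j : ℕ) ∧ w m = k := ⟨l, hl, hkl.symm⟩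
        have P' : ¬ ∃ m : Fin n, (m : ℕ) ≤ (j : ℕ) ∧ (w * Equiv.swap i l) m = k := by
          rintro ⟨m, hm, hk⟩
          rw [hilin] at hk
          have hml : Equiv.swap i l m = l := w.injective (hk.trans hkl)
          have hm2 : m = i := by
            have := congrArg (Equiv.swap i l) hml
            rwa [Equiv.swap_apply_self, Equiv.swap_apply_right] at this
          rw [hm2] at hm; omega
        rw [if_pos P, if_neg P', hkl]
        exact ⟨-1, by ring⟩
      · by_cases hkj1 : k = w i
        · have P : ¬ ∃ m : Fin n, (m : ℕ) ≤ (j : ℕ) ∧ w m = k := by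
            rintro ⟨m, hm, hk⟩
            have : m = i := w.injective (hk.trans hkj1)
            rw [this] at hm; omega
          have P' : ∃ m : Fin n, (m : ℕ) ≤ (j : ℕ) ∧ (w * Equiv.swap i l) m = k :=
            ⟨l, hl, by rw [hswapl, hkj1]⟩
          rw [if_neg P, if_pos P', hswapj1, hkj1]
          exact ⟨-1, by ring⟩
        · have hcond : (∃ m : Fin n, (m : ℕ) ≤ (j : ℕ) ∧ w m = k) ↔
              (∃ m : Fin n, (m : ℕ) ≤ (j : ℕ) ∧ (w * Equiv.swap i l) m = k) := by
            constructor
            · rintro ⟨m, hm, rfl⟩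
              have hml : m ≠ l := fun e => hkl (by rw [e])
              exact ⟨m, hm, by rw [hilin, hswapfix m hm hml]⟩
            · rintro ⟨m, hm, hk⟩
              rw [hilin] at hk
              rcases eq_or_ne m l with rfl | hml
              · rw [Equiv.swap_apply_right] at hk; exact absurd hk.symm hkj1
              · rw [hswapfix m hm hml] at hk; exact ⟨m, hm, hk⟩
          by_cases P : ∃ m : Fin n, (m : ℕ) ≤ (j : ℕ) ∧ w m = k
          · rw [if_pos P, if_pos (hcond.mp P), hswapj1]
            exact ⟨-1, by ring⟩
          · rw [if_neg P, if_neg (fun P' => P (hcond.mpr P'))]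
            exact ⟨0, by ring⟩
    · -- l > j : positions ≤ j untouched
      push_neg at hl
      have hswapfix : ∀ m : Fin n, (m : ℕ) ≤ (j : ℕ) → Equiv.swap i l m = m := by
        intro m hm
        apply Equiv.swap_apply_of_ne_of_ne
        · intro e; have : (m : ℕ) = (i : ℕ) := congrArg Fin.val e; omega
        · intro e; have : (m : ℕ) = (l : ℕ) := congrArg Fin.val e; omega
      have hcond : (∃ m : Fin n, (m : ℕ) ≤ (j : ℕ) ∧ w m = k) ↔
          (∃ m : Fin n, (m : ℕ) ≤ (j : ℕ) ∧ (w * Equiv.swap i l) m = k) := by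
        constructor
        · rintro ⟨m, hm, rfl⟩; exact ⟨m, hm, by rw [hilin, hswapfix m hm]⟩
        · rintro ⟨m, hm, hk⟩; rw [hilin, hswapfix m hm] at hk; exact ⟨m, hm, hk⟩
      rcases eq_or_ne l j1 with rfl | hlne
      · -- l = j1
        have hswapj1 : (w * Equiv.swap i l) l = w i := by
          rw [hilin, Equiv.swap_apply_right]
        by_cases P : ∃ m : Fin n, (m : ℕ) ≤ (j : ℕ) ∧ w m = k
        · rw [if_pos P, if_pos (hcond.mp P), hswapj1]
          exact ⟨1, by ring⟩
        · rw [if_neg P, if_neg (fun P' => P (hcond.mpr P'))]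
          exact ⟨0, by ring⟩
      · -- l > j+1
        have hfix : (w * Equiv.swap i l) j1 = w j1 := by
          rw [hilin, Equiv.swap_apply_of_ne_of_ne]
          · intro e
            have h1 : (j1 : ℕ) = (i : ℕ) := congrArg Fin.val e
            have h2 : (j1 : ℕ) ≠ (l : ℕ) := fun e2 => hlne (Fin.ext e2.symm)
            omega
          · exact fun e => hlne e.symm
        by_cases P : ∃ m : Fin n, (m : ℕ) ≤ (j : ℕ) ∧ w m = k
        · rw [if_pos P, if_pos (hcond.mp P), hfix]
          exact ⟨0, by ring⟩
        · rw [if_neg P, if_neg (fun P' => P (hcond.mpr P'))]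
          exact ⟨0, by ring⟩
end

section
/- Let h be a Hessenberg function on [n] and let A ⊆ [n] be a subset whose cardinality m = |A| satisfies m ∈ [n−1], h(m) = m+1, and h(m−1) = m (where h(0) is understood to be 1; i.e., m ∈ L(h)). Then the function τ_A : S_n → ℤ[t_1,…,t_n], defined by τ_A(w) = t_{w(m)} − t_{w(m+1)} if {w(1),…,w(m)} = A and τ_A(w) = 0 otherwise, belongs to the GKM ring H(h). -/
open MvPolynomial

set_option maxHeartbeats 1000000 in
/-- if `A ⊆ [n]` has cardinality `m` with `m ∈ [n-1]`, `h(m) = m+1` and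
`h(m-1) = m` (vacuous when `m = 1`, since `h(0)` is understood to be `1`), i.e. `m ∈ L(h)`,
then the function `τ_A`, with `τ_A(w) = t_{w(m)} − t_{w(m+1)}` if `{w(1),…,w(m)} = A`
and `0` otherwise, belongs to `H(h)`.
In 0-based indexing the 1-based position `m` is `⟨m-1,_⟩` and `m+1` is `⟨m,_⟩`;
the 1-based value `h(m) = m+1` becomes `(h ⟨m-1,_⟩ : ℕ) = m`, and `h(m-1) = m`
becomes `(h ⟨m-2,_⟩ : ℕ) = m - 1` (required only when `2 ≤ m`). -/
theorem tau_mem_GKM (n : ℕ) (h : Fin n → Fin n)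
    (hmono : Monotone h) (hhess : ∀ j, j ≤ h j)
    (A : Finset (Fin n)) (m : ℕ) (hmA : m = A.card) (hm1 : 1 ≤ m) (hm2 : m ≤ n - 1)
    (hL1 : (h ⟨m - 1, by omega⟩ : ℕ) = m)
    (hL2 : ∀ _hm : 2 ≤ m, (h ⟨m - 2, by omega⟩ : ℕ) = m - 1) :
    InGKM h (fun w =>
      if ∀ k : Fin n, k ∈ A ↔ ∃ l : Fin n, (l : ℕ) < m ∧ w l = k then
        X (w ⟨m - 1, by omega⟩) - X (w ⟨m, by omega⟩)
      else 0) := by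
  intro w i j hji hij
  rw [Ideal.mem_span_singleton]
  beta_reduce
  have hmn : m - 1 < n := by omega
  have hmn' : m < n := by omega
  have hmn2 : m - 2 < n := by omega
  have hji' : (j : ℕ) < (i : ℕ) := Fin.lt_def.mp hji
  have hij' : (i : ℕ) ≤ ((h j : Fin n) : ℕ) := Fin.le_def.mp hij
  have hL1' : ((h ⟨m - 1, hmn⟩ : Fin n) : ℕ) = m := hL1
  set w' := w * Equiv.swap i j with hw'def
  have hw'app : ∀ l, w' l = w (Equiv.swap i j l) := fun l => rfl
  have himg : ((i : ℕ) < m ∨ m ≤ (j : ℕ)) →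
      ∀ k : Fin n, (∃ l : Fin n, (l : ℕ) < m ∧ w l = k) ↔
        (∃ l : Fin n, (l : ℕ) < m ∧ w' l = k) := by
    intro hc k
    have hswap : ∀ l : Fin n, (l : ℕ) < m → ((Equiv.swap i j l : Fin n) : ℕ) < m := by
      intro l hl
      by_cases h1 : l = i
      · subst h1; rw [Equiv.swap_apply_left]; omega
      · by_cases h2 : l = j
        · subst h2; rw [Equiv.swap_apply_right]; omega
        · rw [Equiv.swap_apply_of_ne_of_ne h1 h2]; exact hl
    constructor
    · rintro ⟨l, hl, rfl⟩
      exact ⟨Equiv.swap i j l, hswap l hl, by rw [hw'app, Equiv.swap_apply_self]⟩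
    · rintro ⟨l, hl, rfl⟩
      exact ⟨Equiv.swap i j l, hswap l hl, (hw'app l).symm⟩
  -- derivation of j = m-1 (as value) and i = m (as value) from ¬(i<m ∨ m≤j)
  have hkey : m ≤ (i : ℕ) → (j : ℕ) < m → (j : ℕ) = m - 1 ∧ (i : ℕ) = m := by
    intro hi hj
    have hjm : (j : ℕ) = m - 1 := by
      by_contra hne
      have h2m : 2 ≤ m := by omega
      have hle : j ≤ (⟨m - 2, hmn2⟩ : Fin n) := by
        rw [Fin.le_def]
        show (j : ℕ) ≤ m - 2
        omega
      have hmm := Fin.le_def.mp (hmono hle)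
      have hL2' : ((h ⟨m - 2, hmn2⟩ : Fin n) : ℕ) = m - 1 := hL2 h2m
      omega
    have hj' : j = (⟨m - 1, hmn⟩ : Fin n) := Fin.ext hjm
    rw [hj'] at hij'
    omega
  split_ifs with hw1 hw2 hw2
  · -- both hold
    have hc : (i : ℕ) < m ∨ m ≤ (j : ℕ) := by
      by_contra hcon
      push_neg at hcon
      obtain ⟨h1, h2⟩ := hcon
      have hwi : w i ∈ A := (hw2 (w i)).mpr
        ⟨j, h2, by rw [hw'app, Equiv.swap_apply_right]⟩
      obtain ⟨l, hl, hle⟩ := (hw1 (w i)).mp hwi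
      have hli : l = i := w.injective hle
      subst hli
      omega
    rcases hc with hc | hc
    · by_cases hi1 : (i : ℕ) = m - 1
      · have hi : i = (⟨m - 1, hmn⟩ : Fin n) := Fin.ext hi1
        have e1 : w' (⟨m - 1, hmn⟩ : Fin n) = w j := by
          rw [hw'app, ← hi, Equiv.swap_apply_left]
        have e2 : w' (⟨m, hmn'⟩ : Fin n) = w (⟨m, hmn'⟩ : Fin n) := by
          rw [hw'app, Equiv.swap_apply_of_ne_of_ne]
          · exact Fin.ne_of_val_ne (by simp only [Fin.val_mk]; omega)
          · exact Fin.ne_of_val_ne (by simp only [Fin.val_mk]; omega)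
        rw [e1, e2, hi]
        exact ⟨1, by ring⟩
      · have e1 : w' (⟨m - 1, hmn⟩ : Fin n) = w (⟨m - 1, hmn⟩ : Fin n) := by
          rw [hw'app, Equiv.swap_apply_of_ne_of_ne]
          · exact Fin.ne_of_val_ne (by simp only [Fin.val_mk]; omega)
          · exact Fin.ne_of_val_ne (by simp only [Fin.val_mk]; omega)
        have e2 : w' (⟨m, hmn'⟩ : Fin n) = w (⟨m, hmn'⟩ : Fin n) := by
          rw [hw'app, Equiv.swap_apply_of_ne_of_ne]
          · exact Fin.ne_of_val_ne (by simp only [Fin.val_mk]; omega)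
          · exact Fin.ne_of_val_ne (by simp only [Fin.val_mk]; omega)
        rw [e1, e2]
        exact ⟨0, by ring⟩
    · by_cases hj1 : (j : ℕ) = m
      · have hj : j = (⟨m, hmn'⟩ : Fin n) := Fin.ext hj1
        have e1 : w' (⟨m - 1, hmn⟩ : Fin n) = w (⟨m - 1, hmn⟩ : Fin n) := by
          rw [hw'app, Equiv.swap_apply_of_ne_of_ne]
          · exact Fin.ne_of_val_ne (by simp only [Fin.val_mk]; omega)
          · exact Fin.ne_of_val_ne (by simp only [Fin.val_mk]; omega)
        have e2 : w' (⟨m, hmn'⟩ : Fin n) = w i := by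
          rw [hw'app, ← hj, Equiv.swap_apply_right]
        rw [e1, e2, hj]
        exact ⟨1, by ring⟩
      · have e1 : w' (⟨m - 1, hmn⟩ : Fin n) = w (⟨m - 1, hmn⟩ : Fin n) := by
          rw [hw'app, Equiv.swap_apply_of_ne_of_ne]
          · exact Fin.ne_of_val_ne (by simp only [Fin.val_mk]; omega)
          · exact Fin.ne_of_val_ne (by simp only [Fin.val_mk]; omega)
        have e2 : w' (⟨m, hmn'⟩ : Fin n) = w (⟨m, hmn'⟩ : Fin n) := by
          rw [hw'app, Equiv.swap_apply_of_ne_of_ne]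
          · exact Fin.ne_of_val_ne (by simp only [Fin.val_mk]; omega)
          · exact Fin.ne_of_val_ne (by simp only [Fin.val_mk]; omega)
        rw [e1, e2]
        exact ⟨0, by ring⟩
  · have hc : ¬((i : ℕ) < m ∨ m ≤ (j : ℕ)) :=
      fun hc => hw2 (fun k => (hw1 k).trans (himg hc k))
    push_neg at hc
    obtain ⟨hi, hj⟩ := hc
    obtain ⟨hjm, him⟩ := hkey hi hj
    have hj' : j = (⟨m - 1, hmn⟩ : Fin n) := Fin.ext hjm
    have hi' : i = (⟨m, hmn'⟩ : Fin n) := Fin.ext him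
    rw [hi', hj']
    exact ⟨-1, by ring⟩
  · have hc : ¬((i : ℕ) < m ∨ m ≤ (j : ℕ)) :=
      fun hc => hw1 (fun k => (hw2 k).trans (himg hc k).symm)
    push_neg at hc
    obtain ⟨hi, hj⟩ := hc
    obtain ⟨hjm, him⟩ := hkey hi hj
    have hj' : j = (⟨m - 1, hmn⟩ : Fin n) := Fin.ext hjm
    have hi' : i = (⟨m, hmn'⟩ : Fin n) := Fin.ext him
    have e1 : w' (⟨m - 1, hmn⟩ : Fin n) = w i := by
      rw [hw'app, ← hj', Equiv.swap_apply_right]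
    have e2 : w' (⟨m, hmn'⟩ : Fin n) = w j := by
      rw [hw'app, ← hi', Equiv.swap_apply_left]
    rw [e1, e2]
    exact ⟨-1, by ring⟩
  · exact ⟨0, by ring⟩
end

section
/- Let n ≥ 5 and let h = h_n be the Hessenberg function (2, n−1, …, n−1, n, n) on [n]. For every k ∈ [n], the function ρ_k : S_n → ℤ[t_1,…,t_n], defined by ρ_k(w) = t_{w(n−1)} − t_{w(n)} if w(n) = k and ρ_k(w) = 0 otherwise, belongs to the GKM ring H(h). Moreover, for every w ∈ S_n, Σ_{k=1}^{n} ρ_k(w) = t_{w(n−1)} − t_{w(n)}. -/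
open MvPolynomial

/-- let `n ≥ 5` and let `h = h_n = (2, n−1, …, n−1, n, n)` (in 0-based form:
`h(0) = 1`, `h(j) = n-2` for `1 ≤ j ≤ n-3`, and `h(n-2) = h(n-1) = n-1`).
Then for every `k ∈ [n]` the function `ρ_k`, with `ρ_k(w) = t_{w(n−1)} − t_{w(n)}` if
`w(n) = k` and `0` otherwise, belongs to `H(h)`; moreover
`Σ_{k=1}^{n} ρ_k(w) = t_{w(n−1)} − t_{w(n)}` for every `w ∈ S_n`. -/
theorem rho_mem_GKM_and_sum (n : ℕ) (hn : 5 ≤ n) (h : Fin n → Fin n)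
    (hval : ∀ j : Fin n, (h j : ℕ) =
      if (j : ℕ) = 0 then 1 else if (j : ℕ) + 2 < n then n - 2 else n - 1) :
    (∀ k : Fin n, InGKM h (fun w =>
      if w ⟨n - 1, by omega⟩ = k then
        X (w ⟨n - 2, by omega⟩) - X (w ⟨n - 1, by omega⟩)
      else 0)) ∧
    (∀ w : Equiv.Perm (Fin n),
      (∑ k : Fin n,
        if w ⟨n - 1, by omega⟩ = k then
          X (w ⟨n - 2, by omega⟩) - X (w ⟨n - 1, by omega⟩)
        else (0 : MvPolynomial (Fin n) ℤ)) =
      X (w ⟨n - 2, by omega⟩) - X (w ⟨n - 1, by omega⟩)) := by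
  have hblt : n - 1 < n := by omega
  have halt : n - 2 < n := by omega
  set b : Fin n := ⟨n - 1, hblt⟩ with hbdef
  set a : Fin n := ⟨n - 2, halt⟩ with hadef
  have hab : a ≠ b := by
    simp only [hadef, hbdef, Ne, Fin.mk.injEq]; omega
  constructor
  · intro k w i j hji hih
    have hjb : j ≠ b := by
      intro hj
      have := i.isLt
      have : (j : ℕ) < (i : ℕ) := hji
      rw [hj] at this
      simp [hbdef] at this
      omega
    by_cases hib : i = b
    · -- then j must be a
      have hja : j = a := by
        have hv := hval j
        have hle : (b : ℕ) ≤ (h j : ℕ) := by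
          rw [← hib]; exact hih
        have hlt : (j : ℕ) < (i : ℕ) := hji
        rw [hib] at hlt
        simp only [hbdef] at hle hlt
        apply Fin.ext
        simp only [hadef]
        split_ifs at hv with h1 h2 <;> omega
      subst hib hja
      have e1 : (w * Equiv.swap b a) b = w a := by
        simp [Equiv.Perm.mul_apply]
      have e2 : (w * Equiv.swap b a) a = w b := by
        simp [Equiv.Perm.mul_apply]
      simp only [e1, e2]
      by_cases hwb : w b = k
      · by_cases hwa : w a = k
        · exact absurd (w.injective (hwa.trans hwb.symm)) hab
        · simp only [if_pos hwb, if_neg hwa]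
          exact Ideal.mem_span_singleton.mpr ⟨-1, by ring⟩
      · by_cases hwa : w a = k
        · simp only [if_neg hwb, if_pos hwa]
          exact Ideal.mem_span_singleton.mpr ⟨-1, by ring⟩
        · simp only [if_neg hwb, if_neg hwa, sub_zero]
          exact Ideal.zero_mem _
    · -- i ≠ b, j ≠ b
      have e1 : (w * Equiv.swap i j) b = w b := by
        simp [Equiv.Perm.mul_apply,
          Equiv.swap_apply_of_ne_of_ne (fun hh => hib hh.symm) (fun hh => hjb hh.symm)]
      simp only [e1]
      by_cases hwb : w b = k
      · simp only [if_pos hwb]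
        by_cases hia : i = a
        · subst hia
          have hja : j ≠ a := fun hh => (lt_irrefl _ (hh ▸ hji)).elim
          have e2 : (w * Equiv.swap a j) a = w j := by
            simp [Equiv.Perm.mul_apply]
          rw [e2]
          have : (X (w a) - X (w b) - (X (w j) - X (w b)) : MvPolynomial (Fin n) ℤ) =
              X (w a) - X (w j) := by ring
          rw [this]
          exact Ideal.mem_span_singleton.mpr ⟨1, by ring⟩
        · have hja : j ≠ a := by
            intro hh
            subst hh
            have h1 : (a : ℕ) < (i : ℕ) := hji
            have h2 := i.isLt
            have h3 : (i : ℕ) ≠ n - 1 := fun hh2 => hib (Fin.ext hh2)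
            simp only [hadef] at h1
            omega
          have e2 : (w * Equiv.swap i j) a = w a := by
            simp [Equiv.Perm.mul_apply,
              Equiv.swap_apply_of_ne_of_ne (fun hh => hia hh.symm) (fun hh => hja hh.symm)]
          rw [e2, sub_self]
          exact Ideal.zero_mem _
      · simp only [if_neg hwb, sub_zero]
        exact Ideal.zero_mem _
  · intro w
    simp
end

section
/- Let h be a Hessenberg function on [n] and let i ∈ [n] satisfy h*(i) = i−1, where h*(i) = min{j ∈ [n] : h(j) ≥ i} (so i ≥ 2, h(i−1) ≥ i, and h(j) < i for all j < i−1). Then for every k ∈ [n], the function y*_{i,k} : S_n → ℤ[t_1,…,t_n], defined by y*_{i,k}(w) = t_k − t_{w(i−1)} if k ∈ {w(i), w(i+1), …, w(n)} and y*_{i,k}(w) = 0 otherwise, belongs to the GKM ring H(h). -/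
open MvPolynomial

/-- suppose `i ∈ [n]` satisfies `h*(i) = i−1`, i.e. `i ≥ 2`, `h(i−1) ≥ i`,
and `h(j) < i` for all `j < i−1`. Then for every `k ∈ [n]` the function `y*_{i,k}`, with
`y*_{i,k}(w) = t_k − t_{w(i−1)}` if `k ∈ {w(i), …, w(n)}` and `0` otherwise, belongs to `H(h)`.
Here `i : Fin n` is 0-based (the 1-based row index is `i+1`): `1 ≤ i` encodes `i+1 ≥ 2`,
`(i : ℕ) ≤ h ⟨i-1,_⟩` encodes `h(i−1) ≥ i` (1-based), and
`(j : ℕ) < i - 1 → (h j : ℕ) < i` encodes `h(j) < i` for `j < i−1` (1-based). -/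
theorem ystar_mem_GKM (n : ℕ) (h : Fin n → Fin n)
    (hmono : Monotone h) (hhess : ∀ j, j ≤ h j)
    (i : Fin n) (hi : 1 ≤ (i : ℕ))
    (hstar1 : (i : ℕ) ≤ (h ⟨(i : ℕ) - 1, by omega⟩ : ℕ))
    (hstar2 : ∀ j : Fin n, (j : ℕ) < (i : ℕ) - 1 → (h j : ℕ) < (i : ℕ))
    (k : Fin n) :
    InGKM h (fun w =>
      if ∃ l : Fin n, (i : ℕ) ≤ (l : ℕ) ∧ w l = k then
        X k - X (w ⟨(i : ℕ) - 1, by omega⟩)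
      else 0) := by
  intro w b a hlt hle
  simp only [Ideal.mem_span_singleton]
  set p : Fin n := ⟨(i : ℕ) - 1, by omega⟩ with hpdef
  have hpval : (p : ℕ) = (i : ℕ) - 1 := rfl
  have hab : (a : ℕ) < (b : ℕ) := hlt
  have hle' : (b : ℕ) ≤ (h a : ℕ) := hle
  have hmul : ∀ l : Fin n, (w * Equiv.swap b a) l = w (Equiv.swap b a l) := fun l => rfl
  by_cases hia : (i : ℕ) ≤ (a : ℕ)
  · -- Case A: i ≤ a < b
    have hpa : p ≠ a := Fin.ne_of_val_ne (by omega)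
    have hpb : p ≠ b := Fin.ne_of_val_ne (by omega)
    have hswapge : ∀ l : Fin n, (i : ℕ) ≤ (l : ℕ) → (i : ℕ) ≤ ((Equiv.swap b a l : Fin n) : ℕ) := by
      intro l hl
      rcases eq_or_ne l a with rfl | hla
      · rw [Equiv.swap_apply_right]; omega
      rcases eq_or_ne l b with rfl | hlb
      · rw [Equiv.swap_apply_left]; omega
      · rw [Equiv.swap_apply_of_ne_of_ne hlb hla]; exact hl
    have hcond : (∃ l : Fin n, (i : ℕ) ≤ (l : ℕ) ∧ (w * Equiv.swap b a) l = k) ↔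
        (∃ l : Fin n, (i : ℕ) ≤ (l : ℕ) ∧ w l = k) := by
      constructor
      · rintro ⟨l, hl, hwl⟩
        exact ⟨Equiv.swap b a l, hswapge l hl, by rwa [hmul] at hwl⟩
      · rintro ⟨l, hl, hwl⟩
        exact ⟨Equiv.swap b a l, hswapge l hl, by rw [hmul, Equiv.swap_apply_self]; exact hwl⟩
    have hwp : (w * Equiv.swap b a) p = w p := by
      rw [hmul, Equiv.swap_apply_of_ne_of_ne hpb hpa]
    split_ifs with h1 h2 h2
    · rw [hwp]; simp
    · exact absurd (hcond.mpr h1) h2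
    · exact absurd (hcond.mp h2) h1
    · simp
  by_cases hbi : (b : ℕ) < (i : ℕ)
  · -- Case B: a < b < i
    have hfix : ∀ l : Fin n, (i : ℕ) ≤ (l : ℕ) → Equiv.swap b a l = l := by
      intro l hl
      exact Equiv.swap_apply_of_ne_of_ne (Fin.ne_of_val_ne (by omega))
        (Fin.ne_of_val_ne (by omega))
    have hcond : (∃ l : Fin n, (i : ℕ) ≤ (l : ℕ) ∧ (w * Equiv.swap b a) l = k) ↔
        (∃ l : Fin n, (i : ℕ) ≤ (l : ℕ) ∧ w l = k) := by
      constructor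
      · rintro ⟨l, hl, hwl⟩
        exact ⟨l, hl, by rwa [hmul, hfix l hl] at hwl⟩
      · rintro ⟨l, hl, hwl⟩
        exact ⟨l, hl, by rw [hmul, hfix l hl]; exact hwl⟩
    have hpa : p ≠ a := Fin.ne_of_val_ne (by omega)
    split_ifs with h1 h2 h2
    · by_cases hpb : p = b
      · have hwp : (w * Equiv.swap b a) p = w a := by
          rw [hmul, hpb, Equiv.swap_apply_left]
        rw [hwp, hpb]
        have : (X k - X (w b)) - (X k - X (w a)) =
            -(X (w b) - X (w a) : MvPolynomial (Fin n) ℤ) := by ring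
        rw [this]
        exact dvd_neg.mpr dvd_rfl
      · have hwp : (w * Equiv.swap b a) p = w p := by
          rw [hmul, Equiv.swap_apply_of_ne_of_ne hpb hpa]
        rw [hwp]; simp
    · exact absurd (hcond.mpr h1) h2
    · exact absurd (hcond.mp h2) h1
    · simp
  · -- Case C: a < i ≤ b
    push_neg at hia hbi
    have hap : a = p := by
      refine Fin.ext ?_
      rw [hpval]
      by_contra hne
      have : (a : ℕ) < (i : ℕ) - 1 := by omega
      have := hstar2 a this
      omega
    have hwpb : (w * Equiv.swap b a) p = w b := by
      rw [hmul, ← hap, Equiv.swap_apply_right]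
    have hwpa : w p = w a := by rw [← hap]
    by_cases hk1 : k = w b
    · have hc1 : ∃ l : Fin n, (i : ℕ) ≤ (l : ℕ) ∧ w l = k := ⟨b, hbi, hk1.symm⟩
      have hc2 : ¬ ∃ l : Fin n, (i : ℕ) ≤ (l : ℕ) ∧ (w * Equiv.swap b a) l = k := by
        rintro ⟨l, hl, hwl⟩
        rw [hmul, hk1] at hwl
        have : Equiv.swap b a l = b := w.injective hwl
        have : l = a := by
          have := congrArg (Equiv.swap b a) this
          rwa [Equiv.swap_apply_self, Equiv.swap_apply_left] at this
        omega
      split_ifs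
      rw [sub_zero, hk1, hwpa]
    by_cases hk2 : k = w a
    · have hc1 : ¬ ∃ l : Fin n, (i : ℕ) ≤ (l : ℕ) ∧ w l = k := by
        rintro ⟨l, hl, hwl⟩
        rw [hk2] at hwl
        have : l = a := w.injective hwl
        omega
      have hc2 : ∃ l : Fin n, (i : ℕ) ≤ (l : ℕ) ∧ (w * Equiv.swap b a) l = k :=
        ⟨b, hbi, by rw [hmul, Equiv.swap_apply_left, hk2]⟩
      split_ifs
      rw [hwpb, hk2, zero_sub]
      have : -(X (w a) - X (w b)) = (X (w b) - X (w a) : MvPolynomial (Fin n) ℤ) := by ring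
      rw [this]
    · -- k ∉ {w a, w b}
      have hcond : (∃ l : Fin n, (i : ℕ) ≤ (l : ℕ) ∧ (w * Equiv.swap b a) l = k) ↔
          (∃ l : Fin n, (i : ℕ) ≤ (l : ℕ) ∧ w l = k) := by
        constructor
        · rintro ⟨l, hl, hwl⟩
          rw [hmul] at hwl
          have hna : Equiv.swap b a l ≠ a := fun e => hk2 (by rw [← hwl, e])
          have hnb : Equiv.swap b a l ≠ b := fun e => hk1 (by rw [← hwl, e])
          have hla : l ≠ a := fun e => hnb (by rw [e, Equiv.swap_apply_right])
          have hlb : l ≠ b := fun e => hna (by rw [e, Equiv.swap_apply_left])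
          rw [Equiv.swap_apply_of_ne_of_ne hlb hla] at hwl
          exact ⟨l, hl, hwl⟩
        · rintro ⟨l, hl, hwl⟩
          have hla : l ≠ a := fun e => hk2 (by rw [← hwl, e])
          have hlb : l ≠ b := fun e => hk1 (by rw [← hwl, e])
          exact ⟨l, hl, by rw [hmul, Equiv.swap_apply_of_ne_of_ne hlb hla]; exact hwl⟩
      split_ifs with h1 h2 h2
      · rw [hwpb, hwpa]
        have : (X k - X (w a)) - (X k - X (w b)) =
            (X (w b) - X (w a) : MvPolynomial (Fin n) ℤ) := by ring
        rw [this]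
      · exact absurd (hcond.mpr h1) h2
      · exact absurd (hcond.mp h2) h1
      · simp
end

section
/- Let h be a Hessenberg function on [n]. The GKM ring H(h) is invariant under the dot action of S_n: for every σ ∈ S_n and every f ∈ H(h), the function σ·f defined by (σ·f)(w) = σ(f(σ^{-1}∘w)) also belongs to H(h), where σ acts on ℤ[t_1,…,t_n] as the ring automorphism sending t_i to t_{σ(i)}. -/
open MvPolynomial

/-- the GKM ring `H(h)` is invariant under the dot action of `S_n`:
for `σ ∈ S_n` and `f ∈ H(h)`, the function `σ·f` with `(σ·f)(w) = σ(f(σ⁻¹∘w))`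
belongs to `H(h)`, where `σ` acts on `ℤ[t_1,…,t_n]` by `t_i ↦ t_{σ(i)}`
(the renaming along `σ`). -/
theorem dot_action_invariant (n : ℕ) (h : Fin n → Fin n)
    (hmono : Monotone h) (hhess : ∀ j, j ≤ h j)
    (σ : Equiv.Perm (Fin n))
    (f : Equiv.Perm (Fin n) → MvPolynomial (Fin n) ℤ) (hf : InGKM h f) :
    InGKM h (fun w => rename σ (f (σ⁻¹ * w))) := by
  intro w i j hji hih
  have key := hf (σ⁻¹ * w) i j hji hih
  rw [Ideal.mem_span_singleton] at key ⊢
  obtain ⟨c, hc⟩ := key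
  refine ⟨rename σ c, ?_⟩
  have : f (σ⁻¹ * w) - f (σ⁻¹ * (w * Equiv.swap i j))
      = (X ((σ⁻¹ * w) i) - X ((σ⁻¹ * w) j)) * c := by
    rw [← mul_assoc]; exact hc
  calc (fun w => rename σ (f (σ⁻¹ * w))) w - (fun w => rename σ (f (σ⁻¹ * w))) (w * Equiv.swap i j)
      = rename σ (f (σ⁻¹ * w) - f (σ⁻¹ * (w * Equiv.swap i j))) := by
        simp [map_sub]
    _ = rename σ ((X ((σ⁻¹ * w) i) - X ((σ⁻¹ * w) j)) * c) := by rw [this]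
    _ = (X (w i) - X (w j)) * rename σ c := by
        simp [map_mul, map_sub, rename_X, Equiv.Perm.mul_apply]
end

section
/- Let h be a Hessenberg function on [n] with n ≥ 2, let r ∈ [n], let S_n^r = {w ∈ S_n : w(r) = n}, and let c_r ∈ S_n be the cycle (r r+1 ⋯ n) (sending r ↦ r+1, …, n−1 ↦ n, n ↦ r; the identity if r = n). Then the map w ↦ w∘c_r is a label-preserving isomorphism of labeled graphs from the induced labeled subgraph Γ(S_n^r, h) onto the labeled graph Γ(h^r) of h^r on the permutations of [n−1] (identified with the permutations of [n] fixing n). Precisely: for every w ∈ S_n^r, w∘c_r fixes n; for all 1 ≤ j < i ≤ n with i ≠ r and j ≠ r, one has w∘(i,j) ∈ S_n^r, the condition i ≤ h(j) is equivalent to c_r^{-1}(j) < c_r^{-1}(i) ≤ h^r(c_r^{-1}(j)), the equality (w∘(i,j))∘c_r = (w∘c_r)∘(c_r^{-1}(i), c_r^{-1}(j)) holds, and the labels agree: t_{w(i)} − t_{w(j)} = t_{(w∘c_r)(c_r^{-1}(i))} − t_{(w∘c_r)(c_r^{-1}(j))}. -/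
open MvPolynomial

/-- let `h` be a Hessenberg function on `[n]`, `n ≥ 2`, `r ∈ [n]`, and let
`c = c_r` be the cycle `(r r+1 ⋯ n)` (0-based: `c(j) = j` for `j < r`, `c(j) = j+1` for
`r ≤ j < n-1`, `c(n-1) = r`).  Then `w ↦ w∘c_r` is a label-preserving isomorphism from
the induced labeled subgraph `Γ(S_n^r, h)` onto the labeled graph `Γ(h^r)` (on the
permutations fixing `n`).  Precisely, for every `w ∈ S_n^r` (i.e. `w(r) = n`):
(a) `w∘c_r` fixes `n`;
and for every pair `i, j ∈ [n] \ {r}` with `j < i` — parametrized as `i = c(i')`,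
`j = c(j')` with `i', j' ∈ [n-1]`, so that `i' = c_r⁻¹(i)` and `j' = c_r⁻¹(j)` —
(b) `w∘(i,j) ∈ S_n^r`;
(c) `i ≤ h(j)` is equivalent to `c_r⁻¹(j) < c_r⁻¹(i) ≤ h^r(c_r⁻¹(j))`;
(d) `(w∘(i,j))∘c_r = (w∘c_r)∘(c_r⁻¹(i), c_r⁻¹(j))`;
(e) the labels agree: `t_{w(i)} − t_{w(j)} = t_{(w∘c_r)(c_r⁻¹(i))} − t_{(w∘c_r)(c_r⁻¹(j))}`. -/
theorem minor_graph_isomorphism (n : ℕ) (hn : 2 ≤ n) (h : Fin n → Fin n)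
    (hmono : Monotone h) (hhess : ∀ j, j ≤ h j) (r : Fin n)
    (c : Equiv.Perm (Fin n))
    (hc : ∀ j : Fin n, (c j : ℕ) =
      if (j : ℕ) < (r : ℕ) then (j : ℕ)
      else if (j : ℕ) + 1 < n then (j : ℕ) + 1 else (r : ℕ)) :
    ∀ w : Equiv.Perm (Fin n), ∀ _hw : (w r : ℕ) = n - 1,
      (((w * c) ⟨n - 1, by omega⟩ : Fin n) : ℕ) = n - 1 ∧
      ∀ i' j' : Fin (n - 1), c (finIncl j') < c (finIncl i') →
        (((w * Equiv.swap (c (finIncl i')) (c (finIncl j'))) r : ℕ) = n - 1) ∧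
        (c (finIncl i') ≤ h (c (finIncl j')) ↔ j' < i' ∧ i' ≤ hminor h r j') ∧
        ((w * Equiv.swap (c (finIncl i')) (c (finIncl j'))) * c
          = (w * c) * Equiv.swap (finIncl i') (finIncl j')) ∧
        ((X (w (c (finIncl i'))) - X (w (c (finIncl j'))) : MvPolynomial (Fin n) ℤ)
          = X ((w * c) (finIncl i')) - X ((w * c) (finIncl j'))) := by
  intro w hw
  have hr := r.isLt
  -- value of c on finIncl k
  have hcv : ∀ k : Fin (n - 1), (c (finIncl k) : ℕ) =
      if (k : ℕ) < (r : ℕ) then (k : ℕ) else (k : ℕ) + 1 := by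
    intro k
    have hk := k.isLt
    rw [hc]
    rw [show ((finIncl k : Fin n) : ℕ) = (k : ℕ) from rfl]
    split_ifs <;> omega
  constructor
  · have hcr : c ⟨n - 1, by omega⟩ = r := by
      apply Fin.ext
      rw [hc]
      simp only
      split_ifs <;> omega
    rw [Equiv.Perm.mul_apply, hcr, hw]
  · intro i' j' hlt
    have hi := i'.isLt
    have hj := j'.isLt
    have hvi := hcv i'
    have hvj := hcv j'
    have hltn : (c (finIncl j') : ℕ) < (c (finIncl i') : ℕ) := hlt
    have hij : (j' : ℕ) < (i' : ℕ) := by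
      rw [hvi, hvj] at hltn; split_ifs at hltn <;> omega
    have hnei : c (finIncl i') ≠ r := by
      refine Fin.ne_of_val_ne ?_
      rw [hvi]; split_ifs <;> omega
    have hnej : c (finIncl j') ≠ r := by
      refine Fin.ne_of_val_ne ?_
      rw [hvj]; split_ifs <;> omega
    refine ⟨?_, ?_, ?_, ?_⟩
    · rw [Equiv.Perm.mul_apply, Equiv.swap_apply_of_ne_of_ne hnei.symm hnej.symm]
      · exact hw
    · -- part (c)
      have hmv : (hminor h r j' : ℕ) =
          if (j' : ℕ) < (r : ℕ) then
            if (h (finIncl j') : ℕ) < (r : ℕ) then (h (finIncl j') : ℕ)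
            else (h (finIncl j') : ℕ) - 1
          else (h (finSuccIncl j') : ℕ) - 1 := rfl
      rw [Fin.le_def, Fin.lt_def, Fin.le_def, hvi, hmv]
      rcases lt_or_ge (j' : ℕ) (r : ℕ) with hb | hb
      · have hcj : c (finIncl j') = finIncl j' := by
          apply Fin.ext; rw [hvj]; simp [finIncl, hb]
        rw [hcj]
        have hhj := Fin.le_def.mp (hhess (finIncl j'))
        simp only [finIncl] at hhj
        split_ifs <;> omega
      · have hcj : c (finIncl j') = finSuccIncl j' := by
          apply Fin.ext; rw [hvj]; simp [finIncl, finSuccIncl, Nat.not_lt.mpr hb]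
        rw [hcj]
        have hhj := Fin.le_def.mp (hhess (finSuccIncl j'))
        simp only [finSuccIncl] at hhj
        split_ifs <;> omega
    · -- part (d)
      ext x
      simp only [Equiv.Perm.mul_apply]
      congr 1
      rcases eq_or_ne x (finIncl i') with rfl | hxi
      · rw [Equiv.swap_apply_left, Equiv.swap_apply_left]
      rcases eq_or_ne x (finIncl j') with rfl | hxj
      · rw [Equiv.swap_apply_right, Equiv.swap_apply_right]
      rw [Equiv.swap_apply_of_ne_of_ne hxi hxj,
        Equiv.swap_apply_of_ne_of_ne (c.injective.ne hxi) (c.injective.ne hxj)]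
    · simp [Equiv.Perm.mul_apply]
end
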